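/- arXiv:2107.11735 — 8 statements merged into one kernel-verified Lean document; each statement's English description precedes it below -/
import Mathlib

section
/- The function f(y) := (1/y)(ũ(y/κ₁) − ũ(y/κ₂) + y(ε₁−ε₂)) is strictly increasing on (0,∞); indeed f is differentiable on (0,∞) with f′(y) = −(1/y²)(u(I(y/κ₁)) − u(I(y/κ₂))) > 0 for all y>0. -/
/-!
The conjugate ũ(y) = u(I(y)) − y I(y) is differentiable with ũ′ = −I: concavity of u, through its
tangent lines at I(y) and I(z), traps every difference quotient of ũ between −I(y) and −I(z), and
I is continuous. Since ũ(t) + t I(t) = u(I(t)), differentiating ũ(y/κ)/y gives −u(I(y/κ))/y², so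
f′(y) = −(u(I(y/κ₁)) − u(I(y/κ₂)))/y², which is positive because I is decreasing, u increasing
and y/κ₂ < y/κ₁.
-/

open Set Filter Topology

lemma ConcaveOn.sub_le_mul_sub_of_hasDerivAt {S : Set ℝ} {f : ℝ → ℝ} {f' x y : ℝ}
    (hfc : ConcaveOn ℝ S f) (hx : x ∈ S) (hy : y ∈ S) (hf' : HasDerivAt f f' y) :
    f x - f y ≤ f' * (x - y) := by
  rcases lt_trichotomy x y with hxy | rfl | hxy
  · have h := hfc.le_slope_of_hasDerivAt hx hy hxy hf'
    rw [slope_def_field, le_div_iff₀ (sub_pos.2 hxy)] at h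
    linarith
  · simp
  · have h := hfc.slope_le_of_hasDerivAt hy hx hxy hf'
    rw [slope_def_field, div_le_iff₀ (sub_pos.2 hxy)] at h
    linarith

lemma hasDerivAt_of_sub_bounds {f φ : ℝ → ℝ} {y : ℝ} (hφ : ContinuousAt φ y)
    (hbound : ∀ᶠ z in 𝓝 y, (z - y) * φ y ≤ f z - f y ∧ f z - f y ≤ (z - y) * φ z) :
    HasDerivAt f (φ y) y := by
  rw [hasDerivAt_iff_tendsto_slope]
  have hmin : Tendsto (fun z => min (φ y) (φ z)) (𝓝[≠] y) (𝓝 (φ y)) := by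
    simpa using ((tendsto_const_nhds (x := φ y)).min hφ.tendsto).mono_left
      (nhdsWithin_le_nhds (s := {y}ᶜ))
  have hmax : Tendsto (fun z => max (φ y) (φ z)) (𝓝[≠] y) (𝓝 (φ y)) := by
    simpa using ((tendsto_const_nhds (x := φ y)).max hφ.tendsto).mono_left
      (nhdsWithin_le_nhds (s := {y}ᶜ))
  have hslope : ∀ᶠ z in 𝓝[≠] y,
      min (φ y) (φ z) ≤ slope f y z ∧ slope f y z ≤ max (φ y) (φ z) := by
    filter_upwards [hbound.filter_mono nhdsWithin_le_nhds, self_mem_nhdsWithin]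
      with z ⟨hlow, hup⟩ hz
    rw [slope_def_field]
    rcases lt_or_gt_of_ne (show z ≠ y from hz) with hzy | hzy
    · have hneg : z - y < 0 := sub_neg.2 hzy
      exact ⟨min_le_of_right_le ((le_div_iff_of_neg hneg).2 (by linarith)),
        le_max_of_le_left ((div_le_iff_of_neg hneg).2 (by linarith))⟩
    · have hpos : 0 < z - y := sub_pos.2 hzy
      exact ⟨min_le_of_left_le ((le_div_iff₀ hpos).2 (by linarith)),
        le_max_of_le_right ((div_le_iff₀ hpos).2 (by linarith))⟩
  exact tendsto_of_tendsto_of_tendsto_of_le_of_le' hmin hmax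
    (hslope.mono fun _ h => h.1) (hslope.mono fun _ h => h.2)

section Legendre

variable {u u' I utld : ℝ → ℝ}

lemma neg_sub_mul_le_sub_legendre (hconc : ConcaveOn ℝ (Ioi 0) u)
    (hu : ∀ c, 0 < c → HasDerivAt u (u' c) c) (hI_pos : ∀ y, 0 < y → 0 < I y)
    (hI_left : ∀ y, 0 < y → u' (I y) = y) (hutld : ∀ y, 0 < y → utld y = u (I y) - y * I y)
    {y z : ℝ} (hy : 0 < y) (hz : 0 < z) :
    -(z - y) * I y ≤ utld z - utld y := by
  have htangent := hconc.sub_le_mul_sub_of_hasDerivAt (hI_pos y hy) (hI_pos z hz)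
    (hu _ (hI_pos z hz))
  rw [hI_left z hz] at htangent
  rw [hutld z hz, hutld y hy]
  linarith

lemma hasDerivAt_legendre (hconc : ConcaveOn ℝ (Ioi 0) u)
    (hu : ∀ c, 0 < c → HasDerivAt u (u' c) c) (hI_pos : ∀ y, 0 < y → 0 < I y)
    (hI_left : ∀ y, 0 < y → u' (I y) = y) (hI_cont : ContinuousOn I (Ioi 0))
    (hutld : ∀ y, 0 < y → utld y = u (I y) - y * I y) {y : ℝ} (hy : 0 < y) :
    HasDerivAt utld (-I y) y := by
  refine hasDerivAt_of_sub_bounds (φ := fun t => -I t)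
    (hI_cont.continuousAt (Ioi_mem_nhds hy)).neg ?_
  filter_upwards [Ioi_mem_nhds hy] with z hz
  have hlow := neg_sub_mul_le_sub_legendre hconc hu hI_pos hI_left hutld hy hz
  have hup := neg_sub_mul_le_sub_legendre hconc hu hI_pos hI_left hutld hz hy
  constructor <;> linarith

lemma hasDerivAt_inv_mul_legendre_sub
    (hD : ∀ t, 0 < t → HasDerivAt utld (-I t) t)
    (hutld : ∀ y, 0 < y → utld y = u (I y) - y * I y)
    {κ₁ κ₂ : ℝ} (hκ₁ : 0 < κ₁) (hκ₂ : 0 < κ₂) (c : ℝ) {y : ℝ} (hy : 0 < y) :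
    HasDerivAt (fun y : ℝ => (1 / y) * (utld (y / κ₁) - utld (y / κ₂) + y * c))
      (-(1 / y ^ 2) * (u (I (y / κ₁)) - u (I (y / κ₂)))) y := by
  have hy₁ : 0 < y / κ₁ := div_pos hy hκ₁
  have hy₂ : 0 < y / κ₂ := div_pos hy hκ₂
  have h₁ := (hD _ hy₁).comp y ((hasDerivAt_id' y).div_const κ₁)
  have h₂ := (hD _ hy₂).comp y ((hasDerivAt_id' y).div_const κ₂)
  have hinv : HasDerivAt (fun t : ℝ => 1 / t) (-(1 / y ^ 2)) y := by
    simpa [one_div] using hasDerivAt_inv hy.ne'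
  refine (hinv.mul ((h₁.sub h₂).add ((hasDerivAt_id' y).mul_const c))).congr_deriv ?_
  simp only [Pi.add_apply, Pi.sub_apply, Function.comp_apply]
  rw [hutld _ hy₁, hutld _ hy₂]
  field_simp
  ring

end Legendre

theorem stmt_1_general
    (u u' I utld : ℝ → ℝ)
    (hu_mono : StrictMonoOn u (Set.Ici 0))
    (hu_conc : StrictConcaveOn ℝ (Set.Ici 0) u)
    (hu_deriv : ∀ c : ℝ, 0 < c → HasDerivAt u (u' c) c)
    (hI_pos : ∀ y : ℝ, 0 < y → 0 < I y)
    (hI_left : ∀ y : ℝ, 0 < y → u' (I y) = y)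
    (hI_anti : StrictAntiOn I (Set.Ioi 0))
    (hI_cont : ContinuousOn I (Set.Ioi 0))
    (hutld : ∀ y : ℝ, 0 < y → utld y = u (I y) - y * I y)
    (ε₁ ε₂ κ₁ κ₂ : ℝ)
    (hκ₁ : 0 < κ₁) (hκ₁₂ : κ₁ < κ₂)
    :
    StrictMonoOn (fun y : ℝ => (1 / y) * (utld (y / κ₁) - utld (y / κ₂) + y * (ε₁ - ε₂)))
      (Set.Ioi 0) ∧
    ∀ y : ℝ, 0 < y →
      HasDerivAt (fun y : ℝ => (1 / y) * (utld (y / κ₁) - utld (y / κ₂) + y * (ε₁ - ε₂)))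
        (-(1 / y ^ 2) * (u (I (y / κ₁)) - u (I (y / κ₂)))) y ∧
      0 < -(1 / y ^ 2) * (u (I (y / κ₁)) - u (I (y / κ₂))) := by
  have hconc : ConcaveOn ℝ (Ioi 0) u :=
    hu_conc.concaveOn.subset Ioi_subset_Ici_self (convex_Ioi 0)
  have hκ₂ : 0 < κ₂ := hκ₁.trans hκ₁₂
  have hderiv y (hy : 0 < y) := hasDerivAt_inv_mul_legendre_sub
    (fun t ht => hasDerivAt_legendre hconc hu_deriv hI_pos hI_left hI_cont hutld ht)
    hutld hκ₁ hκ₂ (ε₁ - ε₂) hy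
  have hpos : ∀ y : ℝ, 0 < y → 0 < -(1 / y ^ 2) * (u (I (y / κ₁)) - u (I (y / κ₂))) := by
    intro y hy
    have hy₁ : 0 < y / κ₁ := div_pos hy hκ₁
    have hy₂ : 0 < y / κ₂ := div_pos hy hκ₂
    have hIlt : I (y / κ₁) < I (y / κ₂) :=
      hI_anti hy₂ hy₁ (div_lt_div_of_pos_left hy hκ₁ hκ₁₂)
    have hult := hu_mono (hI_pos _ hy₁).le (hI_pos _ hy₂).le hIlt
    exact mul_pos_of_neg_of_neg (by simpa using pow_pos hy 2) (sub_neg.2 hult)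
  refine ⟨strictMonoOn_of_deriv_pos (convex_Ioi 0)
    (fun y hy => (hderiv y hy).continuousAt.continuousWithinAt) fun y hy => ?_,
    fun y hy => ⟨hderiv y hy, hpos y hy⟩⟩
  rw [interior_Ioi] at hy
  exact (hderiv y hy).deriv ▸ hpos y hy

/-- f(y) := (1/y)(ũ(y/κ₁) − ũ(y/κ₂) + y(ε₁−ε₂)) is strictly increasing on (0,∞),
with f′(y) = −(1/y²)(u(I(y/κ₁)) − u(I(y/κ₂))) > 0 for all y > 0. -/
theorem stmt_1
    (u u' I utld : ℝ → ℝ)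
    (hu_mono : StrictMonoOn u (Set.Ici 0))
    (hu_conc : StrictConcaveOn ℝ (Set.Ici 0) u)
    (hu_cont : ContinuousOn u (Set.Ici 0))
    (hu_deriv : ∀ c : ℝ, 0 < c → HasDerivAt u (u' c) c)
    (hu'_cont : ContinuousOn u' (Set.Ioi 0))
    (hu'_top : Filter.Tendsto u' Filter.atTop (nhds 0))
    (hu'_zero : Filter.Tendsto u' (nhdsWithin 0 (Set.Ioi 0)) Filter.atTop)
    (hI_pos : ∀ y : ℝ, 0 < y → 0 < I y)
    (hI_left : ∀ y : ℝ, 0 < y → u' (I y) = y)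
    (hI_right : ∀ c : ℝ, 0 < c → I (u' c) = c)
    (hI_anti : StrictAntiOn I (Set.Ioi 0))
    (hI_cont : ContinuousOn I (Set.Ioi 0))
    (hI_zero : Filter.Tendsto I (nhdsWithin 0 (Set.Ioi 0)) Filter.atTop)
    (hI_top : Filter.Tendsto I Filter.atTop (nhds 0))
    (hutld : ∀ y : ℝ, 0 < y → utld y = u (I y) - y * I y)
    (ε₁ ε₂ κ₁ κ₂ : ℝ)
    (hε₂ : 0 < ε₂) (hε₁₂ : ε₂ < ε₁)
    (hκ₁ : 0 < κ₁) (hκ₁₂ : κ₁ < κ₂) (hκ₂ : κ₂ < 1)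
    :
    StrictMonoOn (fun y : ℝ => (1 / y) * (utld (y / κ₁) - utld (y / κ₂) + y * (ε₁ - ε₂)))
      (Set.Ioi 0) ∧
    ∀ y : ℝ, 0 < y →
      HasDerivAt (fun y : ℝ => (1 / y) * (utld (y / κ₁) - utld (y / κ₂) + y * (ε₁ - ε₂)))
        (-(1 / y ^ 2) * (u (I (y / κ₁)) - u (I (y / κ₂)))) y ∧
      0 < -(1 / y ^ 2) * (u (I (y / κ₁)) - u (I (y / κ₂))) :=
  stmt_1_general u u' I utld hu_mono hu_conc hu_deriv hI_pos hI_left hI_anti hI_cont hutld ε₁ ε₂ κ₁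
    κ₂ hκ₁ hκ₁₂
end

section
/- There exists a unique z_S > 0 such that f(z_S) = 0, where f(y) := (1/y)(ũ(y/κ₁) − ũ(y/κ₂) + y(ε₁−ε₂)) for y > 0. -/
open MeasureTheory

/-- there exists a unique z_S > 0 with f(z_S) = 0, where
f(y) := (1/y)(ũ(y/κ₁) − ũ(y/κ₂) + y(ε₁−ε₂)). -/
theorem stmt_3
    (u u' I utld : ℝ → ℝ)
    (hu_mono : StrictMonoOn u (Set.Ici 0))
    (hu_conc : StrictConcaveOn ℝ (Set.Ici 0) u)
    (hu_cont : ContinuousOn u (Set.Ici 0))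
    (hu_deriv : ∀ c : ℝ, 0 < c → HasDerivAt u (u' c) c)
    (hu'_cont : ContinuousOn u' (Set.Ioi 0))
    (hu'_top : Filter.Tendsto u' Filter.atTop (nhds 0))
    (hu'_zero : Filter.Tendsto u' (nhdsWithin 0 (Set.Ioi 0)) Filter.atTop)
    (hI_pos : ∀ y : ℝ, 0 < y → 0 < I y)
    (hI_left : ∀ y : ℝ, 0 < y → u' (I y) = y)
    (hI_right : ∀ c : ℝ, 0 < c → I (u' c) = c)
    (hI_anti : StrictAntiOn I (Set.Ioi 0))
    (hI_cont : ContinuousOn I (Set.Ioi 0))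
    (hI_zero : Filter.Tendsto I (nhdsWithin 0 (Set.Ioi 0)) Filter.atTop)
    (hI_top : Filter.Tendsto I Filter.atTop (nhds 0))
    (hutld : ∀ y : ℝ, 0 < y → utld y = u (I y) - y * I y)
    (ε₁ ε₂ κ₁ κ₂ : ℝ)
    (hε₂ : 0 < ε₂) (hε₁₂ : ε₂ < ε₁)
    (hκ₁ : 0 < κ₁) (hκ₁₂ : κ₁ < κ₂) (hκ₂ : κ₂ < 1)
    :
    ∃! z : ℝ, 0 < z ∧ (1 / z) * (utld (z / κ₁) - utld (z / κ₂) + z * (ε₁ - ε₂)) = 0 := by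
  have hκ₂0 : (0:ℝ) < κ₂ := hκ₁.trans hκ₁₂
  set E : ℝ := ε₁ - ε₂ with hEdef
  have hE : 0 < E := sub_pos.mpr hε₁₂
  set c : ℝ := 1 / κ₁ - 1 / κ₂ with hcdef
  have hc : 0 < c := by
    have : 1 / κ₂ < 1 / κ₁ := one_div_lt_one_div_of_lt hκ₁ hκ₁₂
    simpa [hcdef] using sub_pos.mpr this
  -- gradient inequality from strict concavity
  have grad : ∀ d d' : ℝ, 0 < d → 0 < d' → d' ≠ d → u d' - u d < u' d * (d' - d) := by
    intro d d' hd hd' hne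
    rcases hne.lt_or_gt with h | h
    · have h1 := hu_conc.lt_slope_of_hasDerivAt (x := d') (y := d) hd'.le hd.le h (hu_deriv d hd)
      rw [slope_def_field] at h1
      have hdd : (0:ℝ) < d - d' := sub_pos.mpr h
      have h2 : u' d * (d - d') < u d - u d' := (lt_div_iff₀ hdd).mp h1
      have h3 : u' d * (d' - d) = -(u' d * (d - d')) := by ring
      linarith
    · have h1 := hu_conc.slope_lt_of_hasDerivAt (x := d) (y := d') hd.le hd'.le h (hu_deriv d hd)
      rw [slope_def_field] at h1
      have hdd : (0:ℝ) < d' - d := sub_pos.mpr h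
      exact (div_lt_iff₀ hdd).mp h1
  -- Legendre-transform maximality
  have key : ∀ y w : ℝ, 0 < y → 0 < w → y ≠ w → u (I w) - y * I w < utld y := by
    intro y w hy hw hne
    have hIy := hI_pos y hy
    have hIw := hI_pos w hw
    have hne' : I w ≠ I y := fun h => hne (hI_anti.injOn hw hy h).symm
    have h1 := grad (I y) (I w) hIy hIw hne'
    rw [hI_left y hy] at h1
    rw [hutld y hy]
    have h2 : y * (I w - I y) = y * I w - y * I y := by ring
    linarith
  -- basic secant bound: for t ≠ s, utld t + (t - s) * I t < utld s
  have lo : ∀ t s : ℝ, 0 < t → 0 < s → t ≠ s → utld t + (t - s) * I t < utld s := by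
    intro t s ht hs hne
    have h1 := key s t hs ht (Ne.symm hne)
    have h2 := hutld t ht
    have h3 : (t - s) * I t = t * I t - s * I t := by ring
    linarith
  -- slope function
  set σ : ℝ → ℝ → ℝ := fun t s => (utld s - utld t) / (s - t) with hσdef
  have hσup : ∀ t s : ℝ, 0 < t → t < s → σ t s < -I s := by
    intro t s ht hts
    have hs : 0 < s := ht.trans hts
    have h1 := lo s t hs ht hts.ne'
    have h2 : (0:ℝ) < s - t := sub_pos.mpr hts
    show (utld s - utld t) / (s - t) < -I s
    rw [div_lt_iff₀ h2]
    have h3 : -I s * (s - t) = -((s - t) * I s) := by ring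
    linarith
  have hσlo : ∀ t s : ℝ, 0 < t → t < s → -I t < σ t s := by
    intro t s ht hts
    have hs : 0 < s := ht.trans hts
    have h1 := lo t s ht hs hts.ne
    have h2 : (0:ℝ) < s - t := sub_pos.mpr hts
    show -I t < (utld s - utld t) / (s - t)
    rw [lt_div_iff₀ h2]
    have h3 : -I t * (s - t) = (t - s) * I t := by ring
    linarith
  have hσeq : ∀ t s : ℝ, t < s → utld s - utld t = (s - t) * σ t s := by
    intro t s hts
    show utld s - utld t = (s - t) * ((utld s - utld t) / (s - t))
    rw [mul_comm]
    exact (div_mul_cancel₀ _ (sub_ne_zero.mpr hts.ne')).symm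
  -- stepL : σ t s < σ m s for 0 < t < m < s
  have stepL : ∀ t m s : ℝ, 0 < t → t < m → m < s → σ t s < σ m s := by
    intro t m s ht htm hms
    have hm : 0 < m := ht.trans htm
    have hts : t < s := htm.trans hms
    have h1 : utld m - utld t < (m - t) * (-I m) := by
      have h := lo m t hm ht htm.ne'
      have he : (m - t) * (-I m) = -((m - t) * I m) := by ring
      linarith
    have h2 : -I m < σ m s := hσlo m s hm hms
    have h3 : utld m - utld t < (m - t) * σ m s :=
      h1.trans (mul_lt_mul_of_pos_left h2 (sub_pos.mpr htm))
    have h4 : utld s - utld m = (s - m) * σ m s := hσeq m s hms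
    have h5 : utld s - utld t < (s - t) * σ m s := by
      have he : (s - t) * σ m s = (s - m) * σ m s + (m - t) * σ m s := by ring
      linarith
    have h6 : (0:ℝ) < s - t := sub_pos.mpr hts
    show (utld s - utld t) / (s - t) < σ m s
    rw [div_lt_iff₀ h6]
    have he2 : σ m s * (s - t) = (s - t) * σ m s := by ring
    linarith
  -- stepR : σ t m < σ t s for 0 < t < m < s
  have stepR : ∀ t m s : ℝ, 0 < t → t < m → m < s → σ t m < σ t s := by
    intro t m s ht htm hms
    have hm : 0 < m := ht.trans htm
    have hs : 0 < s := hm.trans hms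
    have hts : t < s := htm.trans hms
    have h1 : (s - m) * (-I m) < utld s - utld m := by
      have h := lo m s hm hs hms.ne
      have he : (s - m) * (-I m) = (m - s) * I m := by ring
      linarith
    have h2 : σ t m < -I m := hσup t m ht htm
    have h3 : (s - m) * σ t m < utld s - utld m :=
      (mul_lt_mul_of_pos_left h2 (sub_pos.mpr hms)).trans h1
    have h4 : utld m - utld t = (m - t) * σ t m := hσeq t m htm
    have h5 : (s - t) * σ t m < utld s - utld t := by
      have he : (s - t) * σ t m = (s - m) * σ t m + (m - t) * σ t m := by ring
      linarith
    have h6 : (0:ℝ) < s - t := sub_pos.mpr hts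
    show σ t m < (utld s - utld t) / (s - t)
    rw [lt_div_iff₀ h6]
    have he2 : σ t m * (s - t) = (s - t) * σ t m := by ring
    linarith
  -- monotonicity of z ↦ σ (z/κ₂) (z/κ₁)
  have hdiv_lt : ∀ z : ℝ, 0 < z → z / κ₂ < z / κ₁ := by
    intro z hz
    exact div_lt_div_of_pos_left hz hκ₁ hκ₁₂
  have hmonoσ : ∀ z₁ z₂ : ℝ, 0 < z₁ → z₁ < z₂ →
      σ (z₁ / κ₂) (z₁ / κ₁) < σ (z₂ / κ₂) (z₂ / κ₁) := by
    intro z₁ z₂ hz₁ h12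
    have hz₂ : 0 < z₂ := hz₁.trans h12
    have ht₁ : 0 < z₁ / κ₂ := div_pos hz₁ hκ₂0
    have ht₂ : 0 < z₂ / κ₂ := div_pos hz₂ hκ₂0
    have hs₁ : 0 < z₁ / κ₁ := div_pos hz₁ hκ₁
    have hts₁ : z₁ / κ₂ < z₁ / κ₁ := hdiv_lt z₁ hz₁
    have hts₂ : z₂ / κ₂ < z₂ / κ₁ := hdiv_lt z₂ hz₂
    have htt : z₁ / κ₂ < z₂ / κ₂ := div_lt_div_of_pos_right h12 hκ₂0 -- may need name fix
    have hss : z₁ / κ₁ < z₂ / κ₁ := div_lt_div_of_pos_right h12 hκ₁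
    rcases le_or_gt (z₁ / κ₁) (z₂ / κ₂) with h | h
    · have h1 : σ (z₁ / κ₂) (z₁ / κ₁) < -I (z₁ / κ₁) := hσup _ _ ht₁ hts₁
      have h2 : -I (z₂ / κ₂) < σ (z₂ / κ₂) (z₂ / κ₁) := hσlo _ _ ht₂ hts₂
      have h3 : I (z₂ / κ₂) ≤ I (z₁ / κ₁) := hI_anti.antitoneOn hs₁ ht₂ h
      linarith
    · have h1 : σ (z₁ / κ₂) (z₁ / κ₁) < σ (z₂ / κ₂) (z₁ / κ₁) := stepL _ _ _ ht₁ htt h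
      have h2 : σ (z₂ / κ₂) (z₁ / κ₁) < σ (z₂ / κ₂) (z₂ / κ₁) := stepR _ _ _ ht₂ h hss
      linarith
  -- the function f
  set f : ℝ → ℝ := fun z => (1 / z) * (utld (z / κ₁) - utld (z / κ₂) + z * E) with hfdef
  have hf_eq : ∀ z : ℝ, 0 < z → f z = c * σ (z / κ₂) (z / κ₁) + E := by
    intro z hz
    have h1 : z / κ₁ - z / κ₂ = z * c := by
      rw [hcdef]; field_simp
    have h2 : utld (z / κ₁) - utld (z / κ₂) = (z * c) * σ (z / κ₂) (z / κ₁) := by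
      rw [← h1]; exact hσeq _ _ (hdiv_lt z hz)
    show (1 / z) * (utld (z / κ₁) - utld (z / κ₂) + z * E) = c * σ (z / κ₂) (z / κ₁) + E
    rw [h2]
    field_simp
  have hfmono : StrictMonoOn f (Set.Ioi 0) := by
    intro z₁ hz₁ z₂ hz₂ h12
    rw [hf_eq z₁ hz₁, hf_eq z₂ hz₂]
    have h := mul_lt_mul_of_pos_left (hmonoσ z₁ z₂ hz₁ h12) hc
    linarith
  -- point where f > 0
  obtain ⟨y₀, hy₀⟩ :=
    (hI_top.eventually_lt_const (show (0:ℝ) < E / c from div_pos hE hc)).exists_forall_of_atTop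
  have hYpos : (0:ℝ) < max y₀ 1 := lt_of_lt_of_le one_pos (le_max_right _ _)
  set zhi : ℝ := max y₀ 1 * κ₂ with hzhidef
  have hzhi : 0 < zhi := mul_pos hYpos hκ₂0
  have hfhi : 0 < f zhi := by
    have ht : zhi / κ₂ = max y₀ 1 := by rw [hzhidef]; field_simp
    have h1 : I (zhi / κ₂) < E / c := by rw [ht]; exact hy₀ _ (le_max_left _ _)
    have h2 : -I (zhi / κ₂) < σ (zhi / κ₂) (zhi / κ₁) :=
      hσlo _ _ (div_pos hzhi hκ₂0) (hdiv_lt _ hzhi)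
    have h3 : c * I (zhi / κ₂) < E := by
      have h := mul_lt_mul_of_pos_left h1 hc
      have he : c * (E / c) = E := by field_simp
      linarith
    have h2' := mul_lt_mul_of_pos_left h2 hc
    have h4 : c * -I (zhi / κ₂) = -(c * I (zhi / κ₂)) := by ring
    rw [hf_eq zhi hzhi]
    linarith
  -- point where f < 0
  obtain ⟨y₁, hy₁, hy₁pos⟩ : ∃ y : ℝ, E / c < I y ∧ 0 < y :=
    ((hI_zero.eventually_gt_atTop (E / c)).and self_mem_nhdsWithin).exists
  set zlo : ℝ := y₁ * κ₁ with hzlodef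
  have hzlo : 0 < zlo := mul_pos hy₁pos hκ₁
  have hflo : f zlo < 0 := by
    have hs : zlo / κ₁ = y₁ := by rw [hzlodef]; field_simp
    have h1 : σ (zlo / κ₂) (zlo / κ₁) < -I (zlo / κ₁) :=
      hσup _ _ (div_pos hzlo hκ₂0) (hdiv_lt _ hzlo)
    have h2 : E / c < I (zlo / κ₁) := by rw [hs]; exact hy₁
    have h3 : E < c * I (zlo / κ₁) := by
      have h := (div_lt_iff₀ hc).mp h2
      have he : I (zlo / κ₁) * c = c * I (zlo / κ₁) := by ring
      linarith
    have h1' := mul_lt_mul_of_pos_left h1 hc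
    have h4 : c * -I (zlo / κ₁) = -(c * I (zlo / κ₁)) := by ring
    rw [hf_eq zlo hzlo]
    linarith
  have hlohi : zlo < zhi := by
    rcases lt_trichotomy zlo zhi with h | h | h
    · exact h
    · rw [h] at hflo; linarith
    · have := hfmono (Set.mem_Ioi.mpr hzhi) (Set.mem_Ioi.mpr hzlo) h; linarith
  -- continuity
  have hutld_cont : ContinuousOn utld (Set.Ioi 0) := by
    have h1 : ContinuousOn (fun y => u (I y) - y * I y) (Set.Ioi 0) :=
      (hu_cont.comp hI_cont (fun y hy => (hI_pos y hy).le)).sub (continuousOn_id.mul hI_cont)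
    exact h1.congr (fun y hy => hutld y hy)
  have hfcont : ContinuousOn f (Set.Ioi 0) := by
    apply ContinuousOn.mul
    · exact continuousOn_const.div continuousOn_id (fun z hz => ne_of_gt hz)
    · apply ContinuousOn.add
      · exact (hutld_cont.comp (continuousOn_id.div_const κ₁)
            (fun z hz => Set.mem_Ioi.mpr (div_pos hz hκ₁))).sub
          (hutld_cont.comp (continuousOn_id.div_const κ₂)
            (fun z hz => Set.mem_Ioi.mpr (div_pos hz hκ₂0)))
      · exact continuousOn_id.mul continuousOn_const
  have hIcc : Set.Icc zlo zhi ⊆ Set.Ioi 0 := fun x hx => lt_of_lt_of_le hzlo hx.1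
  have hivt := intermediate_value_Ioo hlohi.le (hfcont.mono hIcc)
  obtain ⟨z, hzmem, hz0⟩ := hivt ⟨hflo, hfhi⟩
  have hzpos : 0 < z := hzlo.trans hzmem.1
  refine ⟨z, ⟨hzpos, hz0⟩, ?_⟩
  rintro y ⟨hypos, hy0⟩
  exact hfmono.injOn (Set.mem_Ioi.mpr hypos) (Set.mem_Ioi.mpr hzpos) (hy0.trans hz0.symm)
end

section
/- For every z > 0, the inequality ũ(z/κ₁) + ε₁ z ≥ ũ(z/κ₂) + ε₂ z holds if and only if z ≥ z_S, with equality if and only if z = z_S. Consequently, for every z > 0, max{ũ(z/κ₁)+ε₁z, ũ(z/κ₂)+ε₂z} equals ũ(z/κ₁)+ε₁z when z ≥ z_S and equals ũ(z/κ₂)+ε₂z when z < z_S. -/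
open MeasureTheory

/-- for z > 0, ũ(z/κ₁)+ε₁z ≥ ũ(z/κ₂)+ε₂z iff z ≥ z_S, with equality iff z = z_S;
consequently the max of the two is the first expression when z ≥ z_S and the second when z < z_S. -/
theorem stmt_4
    (u u' I utld : ℝ → ℝ)
    (hu_mono : StrictMonoOn u (Set.Ici 0))
    (hu_conc : StrictConcaveOn ℝ (Set.Ici 0) u)
    (hu_cont : ContinuousOn u (Set.Ici 0))
    (hu_deriv : ∀ c : ℝ, 0 < c → HasDerivAt u (u' c) c)
    (hu'_cont : ContinuousOn u' (Set.Ioi 0))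
    (hu'_top : Filter.Tendsto u' Filter.atTop (nhds 0))
    (hu'_zero : Filter.Tendsto u' (nhdsWithin 0 (Set.Ioi 0)) Filter.atTop)
    (hI_pos : ∀ y : ℝ, 0 < y → 0 < I y)
    (hI_left : ∀ y : ℝ, 0 < y → u' (I y) = y)
    (hI_right : ∀ c : ℝ, 0 < c → I (u' c) = c)
    (hI_anti : StrictAntiOn I (Set.Ioi 0))
    (hI_cont : ContinuousOn I (Set.Ioi 0))
    (hI_zero : Filter.Tendsto I (nhdsWithin 0 (Set.Ioi 0)) Filter.atTop)
    (hI_top : Filter.Tendsto I Filter.atTop (nhds 0))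
    (hutld : ∀ y : ℝ, 0 < y → utld y = u (I y) - y * I y)
    (ε₁ ε₂ κ₁ κ₂ : ℝ)
    (hε₂ : 0 < ε₂) (hε₁₂ : ε₂ < ε₁)
    (hκ₁ : 0 < κ₁) (hκ₁₂ : κ₁ < κ₂) (hκ₂ : κ₂ < 1)
    (z_S : ℝ) (hzS_pos : 0 < z_S)
    (hzS_zero : (1 / z_S) * (utld (z_S / κ₁) - utld (z_S / κ₂) + z_S * (ε₁ - ε₂)) = 0)
    (hzS_uniq : ∀ y : ℝ, 0 < y →
      (1 / y) * (utld (y / κ₁) - utld (y / κ₂) + y * (ε₁ - ε₂)) = 0 → y = z_S)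
    :
    ∀ z : ℝ, 0 < z →
      (utld (z / κ₂) + ε₂ * z ≤ utld (z / κ₁) + ε₁ * z ↔ z_S ≤ z) ∧
      (utld (z / κ₁) + ε₁ * z = utld (z / κ₂) + ε₂ * z ↔ z = z_S) ∧
      (z_S ≤ z →
        max (utld (z / κ₁) + ε₁ * z) (utld (z / κ₂) + ε₂ * z) = utld (z / κ₁) + ε₁ * z) ∧
      (z < z_S →
        max (utld (z / κ₁) + ε₁ * z) (utld (z / κ₂) + ε₂ * z) = utld (z / κ₂) + ε₂ * z)
    := by
  classical
  -- tangent line inequality for concave u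
  have hconv : ConvexOn ℝ (Set.Ici 0) (fun x => -u x) := hu_conc.concaveOn.neg
  have tangent : ∀ p q : ℝ, 0 < p → 0 < q → u q - u p ≤ u' p * (q - p) := by
    intro p q hp hq
    rcases lt_trichotomy p q with h | h | h
    · have hs := hconv.le_slope_of_hasDerivAt (Set.mem_Ici.2 hp.le) (Set.mem_Ici.2 hq.le) h
        ((hu_deriv p hp).neg)
      rw [slope_def_field] at hs
      rw [le_div_iff₀ (sub_pos.2 h)] at hs
      nlinarith
    · subst h; simp
    · have hs := hconv.slope_le_of_hasDerivAt (Set.mem_Ici.2 hq.le) (Set.mem_Ici.2 hp.le) h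
        ((hu_deriv p hp).neg)
      rw [slope_def_field] at hs
      rw [div_le_iff₀ (sub_pos.2 h)] at hs
      nlinarith
  -- key bounds for utld
  have key : ∀ a b : ℝ, 0 < a → 0 < b →
      (a - b) * I a ≤ utld b - utld a ∧ utld b - utld a ≤ (a - b) * I b := by
    intro a b ha hb
    rw [hutld a ha, hutld b hb]
    have h1 := tangent (I a) (I b) (hI_pos a ha) (hI_pos b hb)
    have h2 := tangent (I b) (I a) (hI_pos b hb) (hI_pos a ha)
    rw [hI_left a ha] at h1
    rw [hI_left b hb] at h2
    constructor <;> linarith [h1, h2]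
  set δ : ℝ := ε₁ - ε₂ with hδdef
  have hδ : 0 < δ := sub_pos.2 hε₁₂
  set c : ℝ := 1/κ₁ - 1/κ₂ with hcdef
  have hκ₂0 : 0 < κ₂ := hκ₁.trans hκ₁₂
  have hc : 0 < c := by
    have : 1/κ₂ < 1/κ₁ := one_div_lt_one_div_of_lt hκ₁ hκ₁₂
    simpa [hcdef, sub_pos] using this
  set g : ℝ → ℝ := fun z => utld (z/κ₁) - utld (z/κ₂) + δ * z with hgdef
  have hg_def : ∀ w, g w = utld (w/κ₁) - utld (w/κ₂) + (ε₁-ε₂)*w := fun w => rfl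
  have gbound : ∀ z : ℝ, 0 < z →
      z * (δ - c * I (z/κ₂)) ≤ g z ∧ g z ≤ z * (δ - c * I (z/κ₁)) := by
    intro z hz
    have ha : 0 < z/κ₂ := div_pos hz hκ₂0
    have hb : 0 < z/κ₁ := div_pos hz hκ₁
    obtain ⟨h1, h2⟩ := key (z/κ₂) (z/κ₁) ha hb
    have hab : z/κ₂ - z/κ₁ = -(z * c) := by
      rw [hcdef]; field_simp; ring
    rw [hab] at h1 h2
    constructor
    · simp only [hgdef]; linarith
    · simp only [hgdef]; linarith
  -- continuity of g on Ioi 0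
  have hutld_cont : ContinuousOn utld (Set.Ioi 0) := by
    refine ContinuousOn.congr ?_ (fun y hy => hutld y hy)
    exact (hu_cont.comp hI_cont (fun y hy => (hI_pos y hy).le)).sub
      (continuousOn_id.mul hI_cont)
  have hg_cont : ContinuousOn g (Set.Ioi 0) := by
    have h1 : ContinuousOn (fun z => utld (z/κ₁)) (Set.Ioi 0) :=
      hutld_cont.comp ((continuous_id.div_const κ₁).continuousOn)
        (fun z hz => Set.mem_Ioi.2 (div_pos hz hκ₁))
    have h2 : ContinuousOn (fun z => utld (z/κ₂)) (Set.Ioi 0) :=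
      hutld_cont.comp ((continuous_id.div_const κ₂).continuousOn)
        (fun z hz => Set.mem_Ioi.2 (div_pos hz hκ₂0))
    exact (h1.sub h2).add ((continuous_const.mul continuous_id).continuousOn)
  -- g z_S = 0
  have g_zS : g z_S = 0 := by
    have hne : (1/z_S : ℝ) ≠ 0 := one_div_ne_zero hzS_pos.ne'
    have hX : utld (z_S/κ₁) - utld (z_S/κ₂) + z_S * (ε₁-ε₂) = 0 := by
      rcases mul_eq_zero.mp hzS_zero with h | h
      · exact absurd h hne
      · exact h
    rw [hg_def]; linarith [hX]
  have g_uniq : ∀ w : ℝ, 0 < w → g w = 0 → w = z_S := by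
    intro w hw hgw
    apply hzS_uniq w hw
    have hX : utld (w/κ₁) - utld (w/κ₂) + w * (ε₁-ε₂) = 0 := by
      rw [hg_def] at hgw; linarith [hgw]
    rw [hX, mul_zero]
  -- g is negative for small arguments
  have hdiv1 : Filter.Tendsto (fun z => z/κ₁) (nhdsWithin 0 (Set.Ioi 0))
      (nhdsWithin 0 (Set.Ioi 0)) := by
    apply tendsto_nhdsWithin_of_tendsto_nhds_of_eventually_within
    · have := ((continuous_id.div_const κ₁).tendsto (0:ℝ)).mono_left
        (nhdsWithin_le_nhds (s := Set.Ioi (0:ℝ)))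
      simpa using this
    · filter_upwards [self_mem_nhdsWithin] with z hz
      exact Set.mem_Ioi.2 (div_pos hz hκ₁)
  have hItop1 : Filter.Tendsto (fun z => I (z/κ₁)) (nhdsWithin 0 (Set.Ioi 0))
      Filter.atTop := hI_zero.comp hdiv1
  have hsmall : ∀ z : ℝ, 0 < z → ∃ w, 0 < w ∧ w < z ∧ g w < 0 := by
    intro z hz
    have hev : ∀ᶠ w in nhdsWithin (0:ℝ) (Set.Ioi 0), δ/c < I (w/κ₁) :=
      hItop1.eventually_gt_atTop (δ/c)
    have hmem : Set.Ioo (0:ℝ) z ∈ nhdsWithin (0:ℝ) (Set.Ioi 0) :=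
      Ioo_mem_nhdsGT_of_mem ⟨le_refl 0, hz⟩
    obtain ⟨w, hIw, hw0, hwz⟩ := (hev.and (Filter.eventually_of_mem hmem (fun x hx => hx))).exists
    refine ⟨w, hw0, hwz, ?_⟩
    have hb := (gbound w hw0).2
    have hneg : δ - c * I (w/κ₁) < 0 := by
      have := (div_lt_iff₀ hc).mp hIw; linarith
    have h3 : w * (δ - c * I (w/κ₁)) < 0 := mul_neg_of_pos_of_neg hw0 hneg
    exact lt_of_le_of_lt hb h3
  -- g is positive for large arguments
  have hdiv2 : Filter.Tendsto (fun z => z/κ₂) Filter.atTop Filter.atTop :=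
    Filter.tendsto_id.atTop_div_const hκ₂0
  have hIbot2 : Filter.Tendsto (fun z => I (z/κ₂)) Filter.atTop (nhds 0) :=
    hI_top.comp hdiv2
  have hlarge : ∀ z : ℝ, ∃ w, z < w ∧ 0 < w ∧ 0 < g w := by
    intro z
    have hev : ∀ᶠ w in Filter.atTop, I (w/κ₂) < δ/c :=
      hIbot2.eventually_lt_const (div_pos hδ hc)
    obtain ⟨w, hIw, hwz, hw0⟩ :=
      (hev.and ((Filter.eventually_gt_atTop z).and (Filter.eventually_gt_atTop 0))).exists
    refine ⟨w, hwz, hw0, ?_⟩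
    have hb := (gbound w hw0).1
    have hpos : 0 < δ - c * I (w/κ₂) := by
      have := (lt_div_iff₀ hc).mp hIw; linarith
    have h3 : 0 < w * (δ - c * I (w/κ₂)) := mul_pos hw0 hpos
    exact lt_of_lt_of_le h3 hb
  -- sign of g
  have gneg : ∀ z : ℝ, 0 < z → z < z_S → g z < 0 := by
    intro z hz hzlt
    by_contra hcon
    push_neg at hcon
    obtain ⟨w, hw0, hwz, hgw⟩ := hsmall z hz
    have hcont : ContinuousOn g (Set.Icc w z) :=
      hg_cont.mono (fun x hx => Set.mem_Ioi.2 (lt_of_lt_of_le hw0 hx.1))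
    obtain ⟨x, hx, hgx⟩ := intermediate_value_Icc hwz.le hcont ⟨hgw.le, hcon⟩
    have hx0 : 0 < x := lt_of_lt_of_le hw0 hx.1
    have hxe := g_uniq x hx0 hgx
    rw [hxe] at hx
    linarith [hx.2]
  have gpos : ∀ z : ℝ, z_S < z → 0 < g z := by
    intro z hzlt
    have hz : 0 < z := hzS_pos.trans hzlt
    by_contra hcon
    push_neg at hcon
    obtain ⟨w, hwz, hw0, hgw⟩ := hlarge z
    have hcont : ContinuousOn g (Set.Icc z w) :=
      hg_cont.mono (fun x hx => Set.mem_Ioi.2 (lt_of_lt_of_le hz hx.1))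
    obtain ⟨x, hx, hgx⟩ := intermediate_value_Icc hwz.le hcont ⟨hcon, hgw.le⟩
    have hx0 : 0 < x := lt_of_lt_of_le hz hx.1
    have hxe := g_uniq x hx0 hgx
    rw [hxe] at hx
    linarith [hx.1]
  -- conclude
  intro z hz
  have hA : utld (z / κ₂) + ε₂ * z ≤ utld (z / κ₁) + ε₁ * z ↔ z_S ≤ z := by
    constructor
    · intro h
      by_contra hn
      push_neg at hn
      have := gneg z hz hn
      rw [hg_def] at this
      linarith
    · intro h
      rcases eq_or_lt_of_le h with heq | hlt
      · have := g_zS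
        rw [hg_def] at this
        rw [← heq]
        linarith
      · have := gpos z hlt
        rw [hg_def] at this
        linarith
  have hB : utld (z / κ₁) + ε₁ * z = utld (z / κ₂) + ε₂ * z ↔ z = z_S := by
    constructor
    · intro h
      apply g_uniq z hz
      rw [hg_def]; linarith
    · intro h
      subst h
      have := g_zS
      rw [hg_def] at this
      linarith
  refine ⟨hA, hB, ?_, ?_⟩
  · intro h
    exact max_eq_left (hA.mpr h)
  · intro h
    apply max_eq_right
    have := gneg z hz h
    rw [hg_def] at this
    linarith
end

section
/- The function z ↦ h(z)/z is strictly increasing on (0,∞), where h(z):=ũ(z/κ₁)−ũ(z)+ε₁z for z>z_S and h(z):=ũ(z/κ₂)−ũ(z)+ε₂z for 0<z≤z_S. -/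
/-!
The dual function `ũ` is convex with `ũ' = -I`: the tangent line of the concave `u` at `I w`
shows that `-I y` is a supporting slope of `ũ` at every `y`, and continuity of `I` turns
supporting slopes into a derivative. For `0 < κ < 1`, the mean value theorem writes the
numerator of the derivative of `z ↦ (ũ (z / κ) - ũ z) / z` as
`z (I z - I (z / κ)) + (I ξ - I (z / κ)) (z / κ - z)` with `z < ξ < z / κ`, which is positive
since `I` is strictly decreasing. So `h z / z` is strictly increasing on each side of `z_S`,
and the two branches agree at `z_S` precisely because `f z_S = 0`.
-/

open Set Filter Topology

theorem ConcaveOn.le_add_mul_sub_of_hasDerivAt {S : Set ℝ} {f : ℝ → ℝ} {f' a c : ℝ}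
    (hf : ConcaveOn ℝ S f) (ha : a ∈ S) (hc : c ∈ S) (hfa : HasDerivAt f f' a) :
    f c ≤ f a + f' * (c - a) := by
  rcases lt_trichotomy c a with hca | rfl | hac
  · have := hf.le_slope_of_hasDerivAt hc ha hca hfa
    rw [slope_def_field, le_div_iff₀ (sub_pos.2 hca)] at this
    linarith
  · simp
  · have := hf.slope_le_of_hasDerivAt ha hc hac hfa
    rw [slope_def_field, div_le_iff₀ (sub_pos.2 hac)] at this
    linarith

theorem hasDerivAt_of_forall_add_mul_sub_le {f g : ℝ → ℝ} {s : Set ℝ} {y : ℝ}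
    (hs : IsOpen s) (hy : y ∈ s) (hsupp : ∀ a ∈ s, ∀ b ∈ s, f a + g a * (b - a) ≤ f b)
    (hg : ContinuousAt g y) : HasDerivAt f (g y) y := by
  have hslope : ∀ w ∈ s, w ≠ y →
      min (g y) (g w) ≤ slope f y w ∧ slope f y w ≤ max (g y) (g w) := by
    intro w hw hwy
    have h₁ := hsupp y hy w hw
    have h₂ := hsupp w hw y hy
    rw [slope_def_field]
    rcases hwy.lt_or_gt with hlt | hgt
    · have hneg : w - y < 0 := sub_neg.2 hlt
      constructor
      · exact (min_le_right _ _).trans ((le_div_iff_of_neg hneg).2 (by linarith))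
      · exact ((div_le_iff_of_neg hneg).2 (by linarith)).trans (le_max_left _ _)
    · have hpos : 0 < w - y := sub_pos.2 hgt
      constructor
      · exact (min_le_left _ _).trans ((le_div_iff₀ hpos).2 (by linarith))
      · exact ((div_le_iff₀ hpos).2 (by linarith)).trans (le_max_right _ _)
  have hgy : Tendsto g (𝓝[≠] y) (𝓝 (g y)) := hg.tendsto.mono_left nhdsWithin_le_nhds
  have hnear : ∀ᶠ w in 𝓝[≠] y, w ∈ s ∧ w ≠ y :=
    (eventually_nhdsWithin_of_eventually_nhds (hs.mem_nhds hy)).and self_mem_nhdsWithin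
  have hmin : Tendsto (fun w => min (g y) (g w)) (𝓝[≠] y) (𝓝 (g y)) := by
    simpa using (tendsto_const_nhds (x := g y)).min hgy
  have hmax : Tendsto (fun w => max (g y) (g w)) (𝓝[≠] y) (𝓝 (g y)) := by
    simpa using (tendsto_const_nhds (x := g y)).max hgy
  rw [hasDerivAt_iff_tendsto_slope]
  refine tendsto_of_tendsto_of_tendsto_of_le_of_le' hmin hmax ?_ ?_
  · filter_upwards [hnear] with w hw using (hslope w hw.1 hw.2).1
  · filter_upwards [hnear] with w hw using (hslope w hw.1 hw.2).2

theorem strictMonoOn_sub_div_of_hasDerivAt {F f : ℝ → ℝ} {κ : ℝ}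
    (hF : ∀ z, 0 < z → HasDerivAt F (f z) z) (hf : StrictMonoOn f (Ioi 0))
    (hκ : 0 < κ) (hκ₁ : κ < 1) :
    StrictMonoOn (fun z => (F (z / κ) - F z) / z) (Ioi 0) := by
  have hderiv : ∀ z, 0 < z → HasDerivAt (fun z => (F (z / κ) - F z) / z)
      (((f (z / κ) * (1 / κ) - f z) * z - (F (z / κ) - F z) * 1) / z ^ 2) z := by
    intro z hz
    have hdil : HasDerivAt (fun x => x / κ) (1 / κ) z := by
      simpa using (hasDerivAt_id z).div_const κ
    exact (((hF _ (div_pos hz hκ)).comp z hdil).sub (hF z hz)).div (hasDerivAt_id z) hz.ne'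
  refine strictMonoOn_of_deriv_pos (convex_Ioi 0)
    (fun z hz => (hderiv z hz).continuousAt.continuousWithinAt) fun z hz => ?_
  rw [interior_Ioi] at hz
  have hz : 0 < z := hz
  rw [(hderiv z hz).deriv]
  have hlt : z < z / κ := by rw [lt_div_iff₀ hκ]; nlinarith
  obtain ⟨ξ, hξ, hξF⟩ := exists_hasDerivAt_eq_slope F f hlt
    (fun x hx => (hF x (hz.trans_le hx.1)).continuousAt.continuousWithinAt)
    (fun x hx => hF x (hz.trans hx.1))
  have hξ0 : 0 < ξ := hz.trans hξ.1
  have hfξ : f ξ < f (z / κ) := hf hξ0 (hz.trans hlt) hξ.2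
  have hfz : f z < f (z / κ) := hf hz (hz.trans hlt) hlt
  have hincr : F (z / κ) - F z = f ξ * (z / κ - z) := by
    rw [hξF, div_mul_cancel₀ _ (sub_pos.2 hlt).ne']
  have hnum : (f (z / κ) * (1 / κ) - f z) * z - (F (z / κ) - F z) * 1
      = z * (f (z / κ) - f z) + (f (z / κ) - f ξ) * (z / κ - z) := by
    rw [hincr]; ring
  rw [hnum]
  exact div_pos (add_pos (mul_pos hz (sub_pos.2 hfz)) (mul_pos (sub_pos.2 hfξ) (sub_pos.2 hlt)))
    (pow_pos hz 2)

theorem dual_add_mul_sub_le {u u' I utld : ℝ → ℝ}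
    (hu_conc : ConcaveOn ℝ (Ici 0) u) (hu_deriv : ∀ c : ℝ, 0 < c → HasDerivAt u (u' c) c)
    (hI_pos : ∀ y : ℝ, 0 < y → 0 < I y) (hI_left : ∀ y : ℝ, 0 < y → u' (I y) = y)
    (hutld : ∀ y : ℝ, 0 < y → utld y = u (I y) - y * I y) {y w : ℝ} (hy : 0 < y) (hw : 0 < w) :
    utld y + -I y * (w - y) ≤ utld w := by
  have htangent : u (I y) ≤ u (I w) + w * (I y - I w) := by
    simpa only [hI_left w hw] using hu_conc.le_add_mul_sub_of_hasDerivAt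
      (hI_pos w hw).le (hI_pos y hy).le (hu_deriv _ (hI_pos w hw))
  rw [hutld y hy, hutld w hw]
  linarith

theorem stmt_5_general
    (u u' I utld : ℝ → ℝ)
    (hu_conc : StrictConcaveOn ℝ (Set.Ici 0) u)
    (hu_deriv : ∀ c : ℝ, 0 < c → HasDerivAt u (u' c) c)
    (hI_pos : ∀ y : ℝ, 0 < y → 0 < I y)
    (hI_left : ∀ y : ℝ, 0 < y → u' (I y) = y)
    (hI_anti : StrictAntiOn I (Set.Ioi 0))
    (hI_cont : ContinuousOn I (Set.Ioi 0))
    (hutld : ∀ y : ℝ, 0 < y → utld y = u (I y) - y * I y)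
    (ε₁ ε₂ κ₁ κ₂ : ℝ)
    (hκ₁ : 0 < κ₁) (hκ₁₂ : κ₁ < κ₂) (hκ₂ : κ₂ < 1)
    (z_S : ℝ) (hzS_pos : 0 < z_S)
    (hzS_zero : (1 / z_S) * (utld (z_S / κ₁) - utld (z_S / κ₂) + z_S * (ε₁ - ε₂)) = 0)
    (h : ℝ → ℝ)
    (hh₁ : ∀ z : ℝ, z_S < z → h z = utld (z / κ₁) - utld z + ε₁ * z)
    (hh₂ : ∀ z : ℝ, 0 < z → z ≤ z_S → h z = utld (z / κ₂) - utld z + ε₂ * z)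
    :
    StrictMonoOn (fun z : ℝ => h z / z) (Set.Ioi 0) := by
  have hdual : ∀ y, 0 < y → HasDerivAt utld (-I y) y := fun y hy =>
    hasDerivAt_of_forall_add_mul_sub_le isOpen_Ioi hy
      (fun a ha b hb => dual_add_mul_sub_le hu_conc.concaveOn hu_deriv hI_pos hI_left hutld ha hb)
      (hI_cont.continuousAt (Ioi_mem_nhds hy)).neg
  have hbranch : ∀ κ ε : ℝ, 0 < κ → κ < 1 →
      StrictMonoOn (fun z => (utld (z / κ) - utld z) / z + ε) (Ioi 0) := fun κ ε hκ hκ1 =>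
    (strictMonoOn_sub_div_of_hasDerivAt hdual hI_anti.neg hκ hκ1).add_const ε
  have hjunction : utld (z_S / κ₁) - utld (z_S / κ₂) + z_S * (ε₁ - ε₂) = 0 := by
    simpa [hzS_pos.ne'] using hzS_zero
  have hlow : EqOn (fun z => (utld (z / κ₂) - utld z) / z + ε₂) (fun z => h z / z)
      (Ioc 0 z_S) := fun z hz => by
    simp only [hh₂ z hz.1 hz.2]
    field_simp [hz.1.ne']
  have hhigh : EqOn (fun z => (utld (z / κ₁) - utld z) / z + ε₁) (fun z => h z / z)
      (Ici z_S) := by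
    intro z hz
    rcases (show z_S ≤ z from hz).eq_or_lt with rfl | hlt
    · simp only [hh₂ z_S hzS_pos le_rfl]
      field_simp [hzS_pos.ne']
      linarith
    · simp only [hh₁ z hlt]
      field_simp [(hzS_pos.trans hlt).ne']
  rw [← Ioc_union_Ici_eq_Ioi hzS_pos]
  exact (((hbranch κ₂ ε₂ (hκ₁.trans hκ₁₂) hκ₂).mono Ioc_subset_Ioi_self).congr hlow).union
    (((hbranch κ₁ ε₁ hκ₁ (hκ₁₂.trans hκ₂)).mono (Ici_subset_Ioi.2 hzS_pos)).congr hhigh)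
    (isGreatest_Ioc hzS_pos) isLeast_Ici

/-- z ↦ h(z)/z is strictly increasing on (0,∞), where h(z)=ũ(z/κ₁)−ũ(z)+ε₁z
for z>z_S and h(z)=ũ(z/κ₂)−ũ(z)+ε₂z for 0<z≤z_S. -/
theorem stmt_5
    (u u' I utld : ℝ → ℝ)
    (hu_mono : StrictMonoOn u (Set.Ici 0))
    (hu_conc : StrictConcaveOn ℝ (Set.Ici 0) u)
    (hu_cont : ContinuousOn u (Set.Ici 0))
    (hu_deriv : ∀ c : ℝ, 0 < c → HasDerivAt u (u' c) c)
    (hu'_cont : ContinuousOn u' (Set.Ioi 0))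
    (hu'_top : Filter.Tendsto u' Filter.atTop (nhds 0))
    (hu'_zero : Filter.Tendsto u' (nhdsWithin 0 (Set.Ioi 0)) Filter.atTop)
    (hI_pos : ∀ y : ℝ, 0 < y → 0 < I y)
    (hI_left : ∀ y : ℝ, 0 < y → u' (I y) = y)
    (hI_right : ∀ c : ℝ, 0 < c → I (u' c) = c)
    (hI_anti : StrictAntiOn I (Set.Ioi 0))
    (hI_cont : ContinuousOn I (Set.Ioi 0))
    (hI_zero : Filter.Tendsto I (nhdsWithin 0 (Set.Ioi 0)) Filter.atTop)
    (hI_top : Filter.Tendsto I Filter.atTop (nhds 0))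
    (hutld : ∀ y : ℝ, 0 < y → utld y = u (I y) - y * I y)
    (ε₁ ε₂ κ₁ κ₂ : ℝ)
    (hε₂ : 0 < ε₂) (hε₁₂ : ε₂ < ε₁)
    (hκ₁ : 0 < κ₁) (hκ₁₂ : κ₁ < κ₂) (hκ₂ : κ₂ < 1)
    (z_S : ℝ) (hzS_pos : 0 < z_S)
    (hzS_zero : (1 / z_S) * (utld (z_S / κ₁) - utld (z_S / κ₂) + z_S * (ε₁ - ε₂)) = 0)
    (hzS_uniq : ∀ y : ℝ, 0 < y →
      (1 / y) * (utld (y / κ₁) - utld (y / κ₂) + y * (ε₁ - ε₂)) = 0 → y = z_S)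
    (h : ℝ → ℝ)
    (hh₁ : ∀ z : ℝ, z_S < z → h z = utld (z / κ₁) - utld z + ε₁ * z)
    (hh₂ : ∀ z : ℝ, 0 < z → z ≤ z_S → h z = utld (z / κ₂) - utld z + ε₂ * z)
    :
    StrictMonoOn (fun z : ℝ => h z / z) (Set.Ioi 0) :=
  stmt_5_general u u' I utld hu_conc hu_deriv hI_pos hI_left hI_anti hI_cont hutld ε₁ ε₂ κ₁ κ₂ hκ₁
    hκ₁₂ hκ₂ z_S hzS_pos hzS_zero h hh₁ hh₂
end

section
/- There exists a unique ẑ > 0 such that h(ẑ) = 0; moreover h(z) < 0 for all z ∈ (0,ẑ) and h(z) > 0 for all z ∈ (ẑ,∞), where h(z):=ũ(z/κ₁)−ũ(z)+ε₁z for z>z_S and h(z):=ũ(z/κ₂)−ũ(z)+ε₂z for 0<z≤z_S. -/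
open MeasureTheory

set_option maxHeartbeats 1000000

/-- there is a unique ẑ > 0 with h(ẑ)=0; moreover h < 0 on (0,ẑ) and h > 0 on (ẑ,∞). -/
theorem stmt_6
    (u u' I utld : ℝ → ℝ)
    (hu_mono : StrictMonoOn u (Set.Ici 0))
    (hu_conc : StrictConcaveOn ℝ (Set.Ici 0) u)
    (hu_cont : ContinuousOn u (Set.Ici 0))
    (hu_deriv : ∀ c : ℝ, 0 < c → HasDerivAt u (u' c) c)
    (hu'_cont : ContinuousOn u' (Set.Ioi 0))
    (hu'_top : Filter.Tendsto u' Filter.atTop (nhds 0))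
    (hu'_zero : Filter.Tendsto u' (nhdsWithin 0 (Set.Ioi 0)) Filter.atTop)
    (hI_pos : ∀ y : ℝ, 0 < y → 0 < I y)
    (hI_left : ∀ y : ℝ, 0 < y → u' (I y) = y)
    (hI_right : ∀ c : ℝ, 0 < c → I (u' c) = c)
    (hI_anti : StrictAntiOn I (Set.Ioi 0))
    (hI_cont : ContinuousOn I (Set.Ioi 0))
    (hI_zero : Filter.Tendsto I (nhdsWithin 0 (Set.Ioi 0)) Filter.atTop)
    (hI_top : Filter.Tendsto I Filter.atTop (nhds 0))
    (hutld : ∀ y : ℝ, 0 < y → utld y = u (I y) - y * I y)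
    (ε₁ ε₂ κ₁ κ₂ : ℝ)
    (hε₂ : 0 < ε₂) (hε₁₂ : ε₂ < ε₁)
    (hκ₁ : 0 < κ₁) (hκ₁₂ : κ₁ < κ₂) (hκ₂ : κ₂ < 1)
    (z_S : ℝ) (hzS_pos : 0 < z_S)
    (hzS_zero : (1 / z_S) * (utld (z_S / κ₁) - utld (z_S / κ₂) + z_S * (ε₁ - ε₂)) = 0)
    (hzS_uniq : ∀ y : ℝ, 0 < y →
      (1 / y) * (utld (y / κ₁) - utld (y / κ₂) + y * (ε₁ - ε₂)) = 0 → y = z_S)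
    (h : ℝ → ℝ)
    (hh₁ : ∀ z : ℝ, z_S < z → h z = utld (z / κ₁) - utld z + ε₁ * z)
    (hh₂ : ∀ z : ℝ, 0 < z → z ≤ z_S → h z = utld (z / κ₂) - utld z + ε₂ * z)
    :
    (∃! z : ℝ, 0 < z ∧ h z = 0) ∧
    ∀ zhat : ℝ, 0 < zhat → h zhat = 0 →
      (∀ z ∈ Set.Ioo 0 zhat, h z < 0) ∧ (∀ z ∈ Set.Ioi zhat, 0 < h z) := by
  have hκ₂0 : 0 < κ₂ := lt_trans hκ₁ hκ₁₂
  have hκ₁1 : κ₁ < 1 := lt_trans hκ₁₂ hκ₂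
  have hε₁ : 0 < ε₁ := lt_trans hε₂ hε₁₂
  -- tangent line inequality for u
  have tang_u : ∀ c d : ℝ, 0 < c → 0 < d → c ≠ d → u c < u d + u' d * (c - d) := by
    intro c d hc hd hcd
    rcases lt_or_gt_of_ne hcd with hlt | hlt
    · have := hu_conc.lt_slope_of_hasDerivAt (Set.mem_Ici.mpr hc.le)
        (Set.mem_Ici.mpr hd.le) hlt (hu_deriv d hd)
      rw [slope_def_field, lt_div_iff₀ (by linarith)] at this
      nlinarith
    · have := hu_conc.slope_lt_of_hasDerivAt (Set.mem_Ici.mpr hd.le)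
        (Set.mem_Ici.mpr hc.le) hlt (hu_deriv d hd)
      rw [slope_def_field, div_lt_iff₀ (by linarith)] at this
      nlinarith
  -- tangent line inequality for utld (subgradient -I)
  have tang : ∀ a b : ℝ, 0 < a → 0 < b → a ≠ b → utld a - I a * (b - a) < utld b := by
    intro a b ha hb hab
    have hIa := hI_pos a ha
    have hIb := hI_pos b hb
    have hIne : I a ≠ I b := by
      intro e
      exact hab (by rw [← hI_left a ha, ← hI_left b hb, e])
    have ht := tang_u (I a) (I b) hIa hIb hIne
    rw [hI_left b hb] at ht
    rw [hutld a ha, hutld b hb]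
    nlinarith
  -- strict convexity of utld on (0, ∞)
  have hconv : StrictConvexOn ℝ (Set.Ioi 0) utld := by
    apply strictConvexOn_of_slope_strict_mono_adjacent (convex_Ioi 0)
    intro x y z hx hz hxy hyz
    have hx0 : (0:ℝ) < x := hx
    have hy0 : (0:ℝ) < y := lt_trans hx0 hxy
    have hz0 : (0:ℝ) < z := hz
    have h1 := tang y x hy0 hx0 (ne_of_gt hxy)
    have h2 := tang y z hy0 hz0 (ne_of_lt hyz)
    rw [div_lt_div_iff₀ (by linarith) (by linarith)]
    have e1 : (utld y - utld x) * (z - y) < (-(I y) * (y - x)) * (z - y) :=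
      mul_lt_mul_of_pos_right (by nlinarith) (by linarith)
    have e2 : (-(I y) * (z - y)) * (y - x) < (utld z - utld y) * (y - x) :=
      mul_lt_mul_of_pos_right (by nlinarith) (by linarith)
    nlinarith [e1, e2]
  have flip : ∀ p q : ℝ, p ≠ q → (utld q - utld p)/(q - p) = (utld p - utld q)/(p - q) := by
    intro p q hpq
    rw [div_eq_div_iff (sub_ne_zero.mpr (Ne.symm hpq)) (sub_ne_zero.mpr hpq)]
    ring
  -- secant over [z, z/κ] is strictly increasing in z
  have key : ∀ κ : ℝ, 0 < κ → κ < 1 → ∀ x y : ℝ, 0 < x → x < y →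
      (utld (x/κ) - utld x)/(x/κ - x) < (utld (y/κ) - utld y)/(y/κ - y) := by
    intro κ hκ0 hκ1 x y hx hxy
    have hy : 0 < y := lt_trans hx hxy
    have hxk : x < x/κ := by rw [lt_div_iff₀ hκ0]; nlinarith
    have hyk : y < y/κ := by rw [lt_div_iff₀ hκ0]; nlinarith
    have hxk0 : (0:ℝ) < x/κ := div_pos hx hκ0
    have hyk0 : (0:ℝ) < y/κ := div_pos hy hκ0
    have hxyk : x/κ < y/κ := by gcongr
    rcases eq_or_ne y (x/κ) with he | hne
    · have hs := hconv.secant_strict_mono (Set.mem_Ioi.mpr hy) (Set.mem_Ioi.mpr hx)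
        (Set.mem_Ioi.mpr hyk0) (ne_of_lt hxy) (ne_of_gt hyk) (lt_trans hxy hyk)
      rw [flip x (x/κ) (ne_of_lt hxk), ← he]
      exact hs
    · have h1 := hconv.secant_strict_mono (Set.mem_Ioi.mpr hxk0) (Set.mem_Ioi.mpr hx)
        (Set.mem_Ioi.mpr hy) (ne_of_lt hxk) hne hxy
      have h2 := hconv.secant_strict_mono (Set.mem_Ioi.mpr hy) (Set.mem_Ioi.mpr hxk0)
        (Set.mem_Ioi.mpr hyk0) (Ne.symm hne) (ne_of_gt hyk) hxyk
      calc (utld (x/κ) - utld x)/(x/κ - x)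
          = (utld x - utld (x/κ))/(x - x/κ) := flip x (x/κ) (ne_of_lt hxk)
        _ < (utld y - utld (x/κ))/(y - x/κ) := h1
        _ = (utld (x/κ) - utld y)/(x/κ - y) := (flip (x/κ) y (Ne.symm hne)).symm ▸ rfl
        _ < (utld (y/κ) - utld y)/(y/κ - y) := h2
  -- each branch ratio is strictly increasing
  have bmono : ∀ κ ε : ℝ, 0 < κ → κ < 1 → ∀ x y : ℝ, 0 < x → x < y →
      (utld (x/κ) - utld x + ε*x)/x < (utld (y/κ) - utld y + ε*y)/y := by
    intro κ ε hκ0 hκ1 x y hx hxy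
    have hy : 0 < y := lt_trans hx hxy
    have hS := key κ hκ0 hκ1 x y hx hxy
    have e : ∀ z : ℝ, 0 < z → (utld (z/κ) - utld z + ε*z)/z
        = ((1-κ)/κ) * ((utld (z/κ) - utld z)/(z/κ - z)) + ε := by
      intro z hz
      have hz0 : z ≠ 0 := ne_of_gt hz
      have hκ0' : κ ≠ 0 := ne_of_gt hκ0
      have h1κ : (0:ℝ) < 1 - κ := by linarith
      have hw : (1-κ)/κ ≠ 0 := ne_of_gt (by positivity)
      have hne : z/κ - z = z * ((1-κ)/κ) := by field_simp
      rw [hne, add_div, mul_div_assoc ε, div_self hz0, mul_one]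
      congr 1
      rw [mul_comm z, ← div_div, ← mul_div_assoc, ← mul_div_assoc, mul_div_cancel_left₀ _ hw]
    rw [e x hx, e y hy]
    have := mul_lt_mul_of_pos_left hS (by
      have : (0:ℝ) < 1 - κ := by linarith
      positivity : (0:ℝ) < (1-κ)/κ)
    linarith
  -- the two branches agree at z_S
  have hA : utld (z_S/κ₁) - utld (z_S/κ₂) + z_S*(ε₁-ε₂) = 0 := by
    rcases mul_eq_zero.mp hzS_zero with h0 | h0
    · exact absurd h0 (one_div_ne_zero (ne_of_gt hzS_pos))
    · exact h0
  have hmatch : utld (z_S/κ₁) - utld z_S + ε₁*z_S = utld (z_S/κ₂) - utld z_S + ε₂*z_S := by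
    linear_combination hA
  -- global strict monotonicity of h z / z
  have Hmono : ∀ x y : ℝ, 0 < x → x < y → h x / x < h y / y := by
    intro x y hx hxy
    have hy := lt_trans hx hxy
    rcases le_or_gt y z_S with hyS | hyS
    · rw [hh₂ x hx (le_of_lt (lt_of_lt_of_le hxy hyS)), hh₂ y hy hyS]
      exact bmono κ₂ ε₂ hκ₂0 hκ₂ x y hx hxy
    · rcases le_or_gt x z_S with hxS | hxS
      · have h2 : (utld (z_S/κ₁) - utld z_S + ε₁*z_S)/z_S < h y / y := by
          rw [hh₁ y hyS]
          exact bmono κ₁ ε₁ hκ₁ hκ₁1 z_S y hzS_pos hyS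
        rcases eq_or_lt_of_le hxS with heq | hxS'
        · rw [hh₂ x hx (le_of_eq heq), heq, ← hmatch]
          exact h2
        · have h1 : h x / x < (utld (z_S/κ₂) - utld z_S + ε₂*z_S)/z_S := by
            rw [hh₂ x hx (le_of_lt hxS')]
            exact bmono κ₂ ε₂ hκ₂0 hκ₂ x z_S hx hxS'
          calc h x / x < (utld (z_S/κ₂) - utld z_S + ε₂*z_S)/z_S := h1
            _ = (utld (z_S/κ₁) - utld z_S + ε₁*z_S)/z_S := by rw [hmatch]
            _ < h y / y := h2
      · rw [hh₁ x hxS, hh₁ y (lt_trans hxS hxy)]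
        exact bmono κ₁ ε₁ hκ₁ hκ₁1 x y hx hxy
  -- a small point where h is negative
  have small : ∃ a : ℝ, 0 < a ∧ a ≤ z_S ∧ h a < 0 := by
    have h1κ : (0:ℝ) < 1 - κ₂ := by linarith
    set M := ε₂*κ₂/(1-κ₂) with hMdef
    have hM0 : 0 < M := by positivity
    have hev : ∀ᶠ t in nhdsWithin 0 (Set.Ioi 0), M < I t := hI_zero.eventually_gt_atTop M
    rw [eventually_nhdsWithin_iff, Metric.eventually_nhds_iff] at hev
    obtain ⟨δ, hδ0, hδ⟩ := hev
    set m := min (δ/2) z_S with hmdef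
    have hm0 : 0 < m := lt_min (by linarith) hzS_pos
    have hmz : m ≤ z_S := by rw [hmdef]; exact min_le_right _ _
    have hmd : m ≤ δ/2 := by rw [hmdef]; exact min_le_left _ _
    have hkm : κ₂ * m ≤ z_S := by nlinarith
    refine ⟨κ₂ * m, by positivity, hkm, ?_⟩
    set a := κ₂ * m with hadef
    have ha0 : 0 < a := by positivity
    have haS : a ≤ z_S := hkm
    have hak : a/κ₂ = m := by
      rw [hadef, mul_div_assoc]
      field_simp
    have hIm : M < I (a/κ₂) := by
      rw [hak]
      refine hδ ?_ (Set.mem_Ioi.mpr hm0)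
      rw [Real.dist_eq, sub_zero, abs_of_pos hm0]
      calc m ≤ δ/2 := min_le_left _ _
        _ < δ := by linarith
    have haa : a < a/κ₂ := by rw [lt_div_iff₀ hκ₂0]; nlinarith
    have T := tang (a/κ₂) a (by positivity) ha0 (ne_of_gt haa)
    have prod : M*(a/κ₂ - a) < I (a/κ₂) * (a/κ₂ - a) :=
      mul_lt_mul_of_pos_right hIm (by linarith)
    have ident : M*(a/κ₂ - a) = ε₂*a := by
      rw [hMdef]
      field_simp
    rw [hh₂ a ha0 haS]
    nlinarith [T, prod, ident]
  -- a big point where h is positive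
  have big : ∃ b : ℝ, z_S < b ∧ 0 < h b := by
    have h1κ : (0:ℝ) < 1 - κ₁ := by linarith
    set c := ε₁*κ₁/(1-κ₁) with hcdef
    have hc0 : 0 < c := by positivity
    have hev : ∀ᶠ z in Filter.atTop, I z < c := hI_top.eventually (gt_mem_nhds hc0)
    obtain ⟨N, hN⟩ := Filter.eventually_atTop.mp hev
    set b := max N (z_S+1) with hbdef
    have hbS : z_S < b := lt_of_lt_of_le (by linarith) (le_max_right _ _)
    have hb0 : 0 < b := lt_trans hzS_pos hbS
    have hIb : I b < c := hN b (le_max_left _ _)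
    refine ⟨b, hbS, ?_⟩
    rw [hh₁ b hbS]
    have hbb : b < b/κ₁ := by rw [lt_div_iff₀ hκ₁]; nlinarith
    have T := tang b (b/κ₁) hb0 (by positivity) (ne_of_lt hbb)
    have prod : I b * (b/κ₁ - b) < c * (b/κ₁ - b) :=
      mul_lt_mul_of_pos_right hIb (by linarith)
    have ident : c*(b/κ₁ - b) = ε₁*b := by
      rw [hcdef]
      field_simp
    nlinarith [T, prod, ident]
  -- continuity
  have hcont : ContinuousOn utld (Set.Ioi 0) := by
    have h1 : ContinuousOn (fun y => u (I y) - y * I y) (Set.Ioi 0) :=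
      (hu_cont.comp hI_cont fun y hy => Set.mem_Ici.mpr (le_of_lt (hI_pos y hy))).sub
        (continuousOn_id.mul hI_cont)
    exact h1.congr fun y hy => hutld y hy
  have hcontψ : ∀ κ ε : ℝ, 0 < κ →
      ContinuousOn (fun z => utld (z/κ) - utld z + ε*z) (Set.Ioi 0) := by
    intro κ ε hκ0
    refine ((ContinuousOn.comp hcont (continuousOn_id.div_const κ) ?_).sub hcont).add
      (continuousOn_const.mul continuousOn_id)
    intro z hz
    exact Set.mem_Ioi.mpr (div_pos (Set.mem_Ioi.mp hz) hκ0)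
  -- existence of a zero
  have exzero : ∃ z : ℝ, 0 < z ∧ h z = 0 := by
    obtain ⟨a, ha0, haS, haneg⟩ := small
    obtain ⟨b, hbS, hbpos⟩ := big
    rcases le_or_gt 0 (utld (z_S/κ₂) - utld z_S + ε₂*z_S) with hS0 | hS0
    · have hsub : Set.Icc a z_S ⊆ Set.Ioi 0 := fun t ht => lt_of_lt_of_le ha0 ht.1
      have hiv := intermediate_value_Icc haS ((hcontψ κ₂ ε₂ hκ₂0).mono hsub)
      have h0mem : (0:ℝ) ∈ Set.Icc (utld (a/κ₂) - utld a + ε₂*a)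
          (utld (z_S/κ₂) - utld z_S + ε₂*z_S) := by
        constructor
        · rw [← hh₂ a ha0 haS]; exact le_of_lt haneg
        · exact hS0
      obtain ⟨cc, hcc, hcc0⟩ := hiv h0mem
      simp only at hcc0
      exact ⟨cc, lt_of_lt_of_le ha0 hcc.1,
        by rw [hh₂ cc (lt_of_lt_of_le ha0 hcc.1) hcc.2]; exact hcc0⟩
    · have hsub : Set.Icc z_S b ⊆ Set.Ioi 0 := fun t ht => lt_of_lt_of_le hzS_pos ht.1
      have hiv := intermediate_value_Icc (le_of_lt hbS) ((hcontψ κ₁ ε₁ hκ₁).mono hsub)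
      have h0mem : (0:ℝ) ∈ Set.Icc (utld (z_S/κ₁) - utld z_S + ε₁*z_S)
          (utld (b/κ₁) - utld b + ε₁*b) := by
        constructor
        · rw [hmatch]; exact le_of_lt hS0
        · rw [← hh₁ b hbS]; exact le_of_lt hbpos
      obtain ⟨cc, hcc, hcc0⟩ := hiv h0mem
      simp only at hcc0
      have hccS : z_S < cc := by
        rcases eq_or_lt_of_le hcc.1 with heq | hlt
        · exfalso
          rw [← heq] at hcc0
          linarith [hmatch, hS0, hcc0]
        · exact hlt
      exact ⟨cc, lt_trans hzS_pos hccS, by rw [hh₁ cc hccS]; exact hcc0⟩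
  obtain ⟨z₀, hz₀pos, hz₀⟩ := exzero
  have signs : ∀ zhat : ℝ, 0 < zhat → h zhat = 0 →
      (∀ z ∈ Set.Ioo 0 zhat, h z < 0) ∧ (∀ z ∈ Set.Ioi zhat, 0 < h z) := by
    intro zh hzh hzh0
    constructor
    · rintro z ⟨hz0, hzlt⟩
      have hm := Hmono z zh hz0 hzlt
      rw [hzh0, zero_div] at hm
      have h2 := mul_neg_of_neg_of_pos hm hz0
      rwa [div_mul_cancel₀ _ (ne_of_gt hz0)] at h2
    · intro z hz
      have hz' : zh < z := Set.mem_Ioi.mp hz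
      have hm := Hmono zh z hzh hz'
      rw [hzh0, zero_div] at hm
      have h2 := mul_pos hm (lt_trans hzh hz')
      rwa [div_mul_cancel₀ _ (ne_of_gt (lt_trans hzh hz'))] at h2
  refine ⟨⟨z₀, ⟨hz₀pos, hz₀⟩, ?_⟩, signs⟩
  rintro w ⟨hw0, hw⟩
  rcases lt_trichotomy w z₀ with hlt | heq | hgt
  · exact absurd hw (ne_of_lt ((signs z₀ hz₀pos hz₀).1 w ⟨hw0, hlt⟩))
  · exact heq
  · exact absurd hw (ne_of_gt ((signs z₀ hz₀pos hz₀).2 w hgt))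
end

section
/- For every y > 0, ∫₀^y η^{−n₂−1} |ũ(η)| dη + ∫_y^∞ η^{−n₁−1} |ũ(η)| dη < ∞. -/
/-!
Since `u` is concave with `u'(I η) = η`, `ũ(η) = max_{c ≥ 0} (u c - η c)` with the maximum
attained at `c = I η`. Hence `ũ ≥ u 0`, `ũ` is antitone, and (envelope theorem, using only the
continuity of `I`) `ũ' = -I`. On `(y, ∞)` this makes `ũ` bounded, and `η ^ (-n₁ - 1)` is
integrable there because `n₁ > 0`. On `(0, y)`, with `p = -n₂ > 0`, integration by parts gives
`∫_a^y η^(p-1) (ũ - u 0) = [η^p (ũ - u 0) / p]_a^y + (1/p) ∫_a^y η^p I`, which is bounded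
uniformly in `a` by the integrability of `η^p I`.
-/

open Set Filter Topology MeasureTheory

theorem ConcaveOn.le_add_mul_sub_of_hasDerivAt_s9 {s : Set ℝ} {f : ℝ → ℝ} {x y f' : ℝ}
    (hf : ConcaveOn ℝ s f) (hx : x ∈ s) (hy : y ∈ s) (hf' : HasDerivAt f f' x) :
    f y ≤ f x + f' * (y - x) := by
  rcases lt_trichotomy y x with h | rfl | h
  · have hs := hf.le_slope_of_hasDerivAt hy hx h hf'
    rw [slope_def_field, le_div_iff₀ (sub_pos.2 h)] at hs
    linarith
  · simp
  · have hs := hf.slope_le_of_hasDerivAt hx hy h hf'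
    rw [slope_def_field, div_le_iff₀ (sub_pos.2 h)] at hs
    linarith

theorem hasDerivAt_neg_of_mul_le_sub_le_mul {f g : ℝ → ℝ} {x : ℝ} (hg : ContinuousAt g x)
    (hfg : ∀ᶠ z in 𝓝 x, (z - x) * g z ≤ f x - f z ∧ f x - f z ≤ (z - x) * g x) :
    HasDerivAt f (-g x) x := by
  rw [hasDerivAt_iff_isLittleO]
  have hsmall : (fun z => (g z - g x) * (z - x)) =o[𝓝 x] fun z => z - x := by
    have hg0 : (fun z => g z - g x) =o[𝓝 x] fun _ => (1 : ℝ) :=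
      (Asymptotics.isLittleO_one_iff ℝ).2 (by simpa using hg.sub_const (g x))
    simpa using hg0.mul_isBigO (Asymptotics.isBigO_refl (fun z => z - x) _)
  refine Asymptotics.IsBigO.trans_isLittleO (Asymptotics.IsBigO.of_bound 1 ?_) hsmall
  filter_upwards [hfg] with z ⟨hlow, hup⟩
  have hD : 0 ≤ f z - f x - (z - x) • -g x := by simp only [smul_eq_mul]; linarith
  rw [one_mul, Real.norm_of_nonneg hD, Real.norm_eq_abs]
  refine le_trans ?_ (neg_le_abs _)
  simp only [smul_eq_mul]
  linarith

theorem integral_rpow_sub_one_mul_le {f g : ℝ → ℝ} {p a b : ℝ} (hp : 0 < p) (ha : 0 < a)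
    (hab : a ≤ b) (hf : ∀ x ∈ Icc a b, HasDerivAt f (-g x) x) (hfa : 0 ≤ f a)
    (hg : ContinuousOn g (Icc a b)) :
    ∫ x in a..b, x ^ (p - 1) * f x ≤ (b ^ p * f b + ∫ x in a..b, x ^ p * g x) / p := by
  rw [← uIcc_of_le hab] at hf hg
  have hpos : ∀ x ∈ uIcc a b, x ≠ 0 := fun x hx =>
    (ha.trans_le (by rw [uIcc_of_le hab] at hx; exact hx.1)).ne'
  have hpow : ∀ x ∈ uIcc a b, HasDerivAt (fun x => x ^ p / p) (x ^ (p - 1)) x := by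
    intro x hx
    exact ((Real.hasDerivAt_rpow_const (Or.inl (hpos x hx))).div_const p).congr_deriv
      (mul_div_cancel_left₀ _ hp.ne')
  have hpow_cont : ContinuousOn (fun x : ℝ => x ^ (p - 1)) (uIcc a b) :=
    continuousOn_id.rpow_const fun x hx => Or.inl (hpos x hx)
  have hparts := intervalIntegral.integral_mul_deriv_eq_deriv_mul hf hpow
    hg.neg.intervalIntegrable hpow_cont.intervalIntegrable
  have hgp : ∫ x in a..b, -g x * (x ^ p / p) = -((∫ x in a..b, x ^ p * g x) / p) := by
    rw [← intervalIntegral.integral_div, ← intervalIntegral.integral_neg]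
    congr 1
    ext x
    ring
  have hfa' : 0 ≤ f a * (a ^ p / p) := by positivity
  simp only [mul_comm (_ ^ (p - 1))]
  rw [hparts, hgp, add_div]
  have : f b * (b ^ p / p) = b ^ p * f b / p := by ring
  linarith

theorem integrableOn_Ioc_rpow_sub_one_mul {f g : ℝ → ℝ} {p y : ℝ} (hp : 0 < p)
    (hf : ∀ x ∈ Ioc 0 y, HasDerivAt f (-g x) x) (hf_nonneg : ∀ x ∈ Ioc 0 y, 0 ≤ f x)
    (hg : ContinuousOn g (Ioc 0 y)) (hg_int : IntegrableOn (fun x => x ^ p * g x) (Ioc 0 y)) :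
    IntegrableOn (fun x => x ^ (p - 1) * f x) (Ioc 0 y) := by
  rcases le_or_gt y 0 with hy | hy
  · simp [Ioc_eq_empty_of_le hy]
  have hcont : ContinuousOn (fun x => x ^ (p - 1) * f x) (Ioc 0 y) := fun x hx =>
    ((Real.continuousAt_rpow_const x _ (Or.inl hx.1.ne')).mul
      (hf x hx).continuousAt).continuousWithinAt
  set a : ℕ → ℝ := fun n => y / (n + 1)
  have ha : ∀ n, a n ∈ Ioc 0 y := fun n =>
    ⟨by positivity, div_le_self hy.le (by linarith [n.cast_nonneg (α := ℝ)])⟩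
  have hsub : ∀ n, Icc (a n) y ⊆ Ioc 0 y := fun n => Icc_subset_Ioc (ha n).1 le_rfl
  have ha_lim : Tendsto a atTop (𝓝 0) :=
    tendsto_const_nhds.div_atTop (tendsto_atTop_add_const_right _ 1 tendsto_natCast_atTop_atTop)
  refine integrableOn_Ioc_of_intervalIntegral_norm_bounded_left
    (I := (y ^ p * f y + ∫ x in Ioc 0 y, ‖x ^ p * g x‖) / p)
    (fun n => ((hcont.mono (hsub n)).integrableOn_Icc).mono_set Ioc_subset_Icc_self) ha_lim
    (Eventually.of_forall fun n => ?_)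
  have hg_tail : ∫ x in a n..y, x ^ p * g x ≤ ∫ x in Ioc 0 y, ‖x ^ p * g x‖ := by
    rw [intervalIntegral.integral_of_le (ha n).2]
    exact (Real.le_norm_self _).trans ((norm_integral_le_integral_norm _).trans
      (setIntegral_mono_set hg_int.norm (ae_of_all _ fun _ => norm_nonneg _)
        (Ioc_subset_Ioc_left (ha n).1.le).eventuallyLE))
  calc ∫ x in Ioc (a n) y, ‖x ^ (p - 1) * f x‖ = ∫ x in a n..y, x ^ (p - 1) * f x := by
        rw [intervalIntegral.integral_of_le (ha n).2]
        refine setIntegral_congr_fun measurableSet_Ioc fun x hx => Real.norm_of_nonneg ?_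
        have hx' : x ∈ Ioc 0 y := hsub n (Ioc_subset_Icc_self hx)
        exact mul_nonneg (Real.rpow_nonneg hx'.1.le _) (hf_nonneg x hx')
    _ ≤ (y ^ p * f y + ∫ x in a n..y, x ^ p * g x) / p :=
        integral_rpow_sub_one_mul_le hp (ha n).1 (ha n).2 (fun x hx => hf x (hsub n hx))
          (hf_nonneg _ (ha n)) (hg.mono (hsub n))
    _ ≤ (y ^ p * f y + ∫ x in Ioc 0 y, ‖x ^ p * g x‖) / p := by gcongr

theorem hasDerivAt_of_le_sub_mul {u v I : ℝ → ℝ} {U : Set ℝ} {x : ℝ} (hU : U ∈ 𝓝 x)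
    (hI : ContinuousAt I x) (hv : ∀ η ∈ U, v η = u (I η) - η * I η)
    (hle : ∀ η ∈ U, ∀ ζ ∈ U, u (I ζ) - η * I ζ ≤ v η) :
    HasDerivAt v (-I x) x := by
  refine hasDerivAt_neg_of_mul_le_sub_le_mul hI ?_
  filter_upwards [hU] with z hz
  have hx := mem_of_mem_nhds hU
  have hxz := hle x hx z hz
  have hzx := hle z hz x hx
  rw [hv x hx] at hxz ⊢
  rw [hv z hz] at hzx ⊢
  constructor <;> linarith

theorem integrableOn_rpow_mul_abs_of_abs_le {v h : ℝ → ℝ} {q : ℝ} {s : Set ℝ}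
    (hs : MeasurableSet s) (hs0 : s ⊆ Ioi 0) (hv : ContinuousOn v s)
    (hh : IntegrableOn (fun x => x ^ q * h x) s) (hvh : ∀ x ∈ s, |v x| ≤ h x) :
    IntegrableOn (fun x => x ^ q * |v x|) s := by
  have hpow : ∀ x ∈ s, 0 ≤ x ^ q := fun x hx => Real.rpow_nonneg (hs0 hx).le q
  refine hh.mono' ?_ (ae_restrict_of_forall_mem hs fun x hx => ?_)
  · exact ((continuousOn_id.rpow_const fun x hx => Or.inl (hs0 hx).ne').mul
      hv.abs).aestronglyMeasurable hs
  · rw [Real.norm_eq_abs, abs_mul, abs_abs, abs_of_nonneg (hpow x hx)]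
    exact mul_le_mul_of_nonneg_left (hvh x hx) (hpow x hx)

theorem stmt_9_general
    (n₁ n₂ : ℝ)
    (hn₂0 : n₂ < 0) (hn₁1 : 1 < n₁)
    (u u' I utld : ℝ → ℝ)
    (hu_conc : StrictConcaveOn ℝ (Set.Ici 0) u)
    (hu_deriv : ∀ c : ℝ, 0 < c → HasDerivAt u (u' c) c)
    (hI_pos : ∀ y : ℝ, 0 < y → 0 < I y)
    (hI_left : ∀ y : ℝ, 0 < y → u' (I y) = y)
    (hI_cont : ContinuousOn I (Set.Ioi 0))
    (hutld : ∀ y : ℝ, 0 < y → utld y = u (I y) - y * I y)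
    (hI_int : ∀ y : ℝ, 0 < y →
      MeasureTheory.IntegrableOn (fun η => η ^ (-n₂) * I η) (Set.Ioo 0 y) MeasureTheory.volume)
    :
    ∀ y : ℝ, 0 < y →
      MeasureTheory.IntegrableOn (fun η => η ^ (-n₂ - 1) * |utld η|) (Set.Ioo 0 y)
        MeasureTheory.volume ∧
      MeasureTheory.IntegrableOn (fun η => η ^ (-n₁ - 1) * |utld η|) (Set.Ioi y)
        MeasureTheory.volume := by
  intro y hy
  have legendre : ∀ η > 0, ∀ c ≥ 0, u c - η * c ≤ utld η := fun η hη c hc => by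
    have := hu_conc.concaveOn.le_add_mul_sub_of_hasDerivAt_s9 (mem_Ici.2 (hI_pos η hη).le)
      (mem_Ici.2 hc) (hI_left η hη ▸ hu_deriv _ (hI_pos η hη))
    rw [hutld η hη]
    linarith
  have hderiv : ∀ x > 0, HasDerivAt utld (-I x) x := fun x hx =>
    hasDerivAt_of_le_sub_mul (Ioi_mem_nhds hx) (hI_cont.continuousAt (Ioi_mem_nhds hx)) hutld
      fun η hη ζ hζ => legendre η hη _ (hI_pos ζ hζ).le
  have hcont : ContinuousOn utld (Ioi 0) := fun x hx =>
    (hderiv x hx).continuousAt.continuousWithinAt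
  have hlower : ∀ η > 0, u 0 ≤ utld η := fun η hη => by simpa using legendre η hη 0 le_rfl
  constructor
  · have hshift := integrableOn_Ioc_rpow_sub_one_mul (f := fun η => utld η - u 0)
      (neg_pos.2 hn₂0) (fun x hx => (hderiv x hx.1).sub_const _)
      (fun x hx => sub_nonneg.2 (hlower x hx.1)) (hI_cont.mono Ioc_subset_Ioi_self)
      ((integrableOn_Ioc_iff_integrableOn_Ioo (f := fun η => η ^ (-n₂) * I η)).2 (hI_int y hy))
    have hpow : IntegrableOn (fun x : ℝ => x ^ (-n₂ - 1)) (Ioo 0 y) :=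
      (intervalIntegrable_iff_integrableOn_Ioo_of_le hy.le).1
        (intervalIntegral.intervalIntegrable_rpow' (by linarith))
    refine integrableOn_rpow_mul_abs_of_abs_le (h := fun x => utld x - u 0 + |u 0|)
      measurableSet_Ioo (fun x hx => hx.1) (hcont.mono fun x hx => hx.1)
      (((hshift.mono_set Ioo_subset_Ioc_self).add (hpow.mul_const |u 0|)).congr_fun
        (fun x _ => by simp only [Pi.add_apply]; ring) measurableSet_Ioo) fun x hx => ?_
    have := hlower x hx.1
    exact abs_le.2 ⟨by linarith [neg_abs_le (u 0)], by linarith [le_abs_self (u 0)]⟩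
  · refine integrableOn_rpow_mul_abs_of_abs_le (h := fun _ => max |u 0| |utld y|)
      measurableSet_Ioi (fun x hx => hy.trans hx) (hcont.mono fun x hx => hy.trans hx)
      ((integrableOn_Ioi_rpow_of_lt (by linarith) hy).mul_const _) fun x hx => ?_
    have hx0 : 0 < x := hy.trans hx
    have := legendre y hy _ (hI_pos x hx0).le
    refine abs_le_max_abs_abs (hlower x hx0) ?_
    rw [hutld x hx0]
    nlinarith [hI_pos x hx0, mem_Ioi.1 hx]

/-- for every y > 0, ∫₀^y η^{−n₂−1}|ũ(η)|dη + ∫_y^∞ η^{−n₁−1}|ũ(η)|dη < ∞. -/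
theorem stmt_9
    (δ r θ n₁ n₂ : ℝ)
    (hδ : 0 < δ) (hr : 0 < r) (hθ : θ ≠ 0)
    (hn₂0 : n₂ < 0) (hn₁1 : 1 < n₁)
    (hroot₁ : θ ^ 2 / 2 * n₁ ^ 2 + (δ - r - θ ^ 2 / 2) * n₁ - δ = 0)
    (hroot₂ : θ ^ 2 / 2 * n₂ ^ 2 + (δ - r - θ ^ 2 / 2) * n₂ - δ = 0)
    (u u' I utld : ℝ → ℝ)
    (hu_mono : StrictMonoOn u (Set.Ici 0))
    (hu_conc : StrictConcaveOn ℝ (Set.Ici 0) u)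
    (hu_cont : ContinuousOn u (Set.Ici 0))
    (hu_deriv : ∀ c : ℝ, 0 < c → HasDerivAt u (u' c) c)
    (hu'_cont : ContinuousOn u' (Set.Ioi 0))
    (hu'_top : Filter.Tendsto u' Filter.atTop (nhds 0))
    (hu'_zero : Filter.Tendsto u' (nhdsWithin 0 (Set.Ioi 0)) Filter.atTop)
    (hI_pos : ∀ y : ℝ, 0 < y → 0 < I y)
    (hI_left : ∀ y : ℝ, 0 < y → u' (I y) = y)
    (hI_right : ∀ c : ℝ, 0 < c → I (u' c) = c)
    (hI_anti : StrictAntiOn I (Set.Ioi 0))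
    (hI_cont : ContinuousOn I (Set.Ioi 0))
    (hI_zero : Filter.Tendsto I (nhdsWithin 0 (Set.Ioi 0)) Filter.atTop)
    (hI_top : Filter.Tendsto I Filter.atTop (nhds 0))
    (hutld : ∀ y : ℝ, 0 < y → utld y = u (I y) - y * I y)
    (hI_int : ∀ y : ℝ, 0 < y →
      MeasureTheory.IntegrableOn (fun η => η ^ (-n₂) * I η) (Set.Ioo 0 y) MeasureTheory.volume)
    :
    ∀ y : ℝ, 0 < y →
      MeasureTheory.IntegrableOn (fun η => η ^ (-n₂ - 1) * |utld η|) (Set.Ioo 0 y)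
        MeasureTheory.volume ∧
      MeasureTheory.IntegrableOn (fun η => η ^ (-n₁ - 1) * |utld η|) (Set.Ioi y)
        MeasureTheory.volume :=
  stmt_9_general n₁ n₂ hn₂0 hn₁1 u u' I utld hu_conc hu_deriv hI_pos hI_left hI_cont hutld hI_int
end

section
/- The function X_R is strictly decreasing on (0,∞), i.e. X_R′(y) < 0 for every y > 0; equivalently, J_R is strictly convex on (0,∞). -/
/-!
Substituting `η = y t` turns `X_R y` and `J_R y` into positive multiples of
`∫₀¹ t ^ p f (y t) dt + ∫₁^∞ t ^ q f (y t) dt`, with `f = I` and `f = ũ` respectively and weights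
that do not depend on `y`. Since `I` is strictly decreasing, so is each integrand of the first kind
as a function of `y`. The function `ũ y = sup_c (u c - y c)` is a supremum of affine functions of
`y`, each of which touches it at exactly one point because `u` is strictly concave; hence `ũ` is
strictly convex, and so is each integrand of the second kind.

The integrals converge: at infinity `n₁ > 1` beats the linear growth of `ũ`, and near `0` an
integration by parts with `ũ' = -I` bounds `∫ η ^ (p - 1) (ũ η - ũ y)` by `p⁻¹ ∫ η ^ p I η`.
-/

open MeasureTheory Set Filter Topology
open scoped Pointwise

theorem setIntegral_lt_setIntegral {α : Type*} [MeasurableSpace α] {μ : Measure α} {s : Set α}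
    {f g : α → ℝ} (hs : MeasurableSet s) (hμs : μ s ≠ 0) (hf : IntegrableOn f s μ)
    (hg : IntegrableOn g s μ) (hlt : ∀ x ∈ s, f x < g x) :
    ∫ x in s, f x ∂μ < ∫ x in s, g x ∂μ := by
  have hsupp : (Function.support fun x => g x - f x) ∩ s = s :=
    inter_eq_right.2 fun x hx => (sub_pos.2 (hlt x hx)).ne'
  rw [← sub_pos, ← integral_sub hg hf, setIntegral_pos_iff_support_of_nonneg_ae
    ((ae_restrict_iff' hs).2 (ae_of_all _ fun x hx => (sub_pos.2 (hlt x hx)).le)) (hg.sub hf),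
    hsupp]
  exact pos_iff_ne_zero.2 hμs

theorem integrableOn_Ioc_of_nonneg_of_setIntegral_le {f : ℝ → ℝ} {a b K : ℝ} (hab : a < b)
    (hf₀ : ∀ x ∈ Ioc a b, 0 ≤ f x) (hfi : ∀ c ∈ Ioo a b, IntegrableOn f (Ioc c b))
    (hK : ∀ c ∈ Ioo a b, ∫ x in Ioc c b, f x ≤ K) : IntegrableOn f (Ioc a b) := by
  have : (comap ((↑) : Ioo a b → ℝ) (𝓝 a)).NeBot := by
    rw [← mem_closure_iff_comap_neBot, closure_Ioo hab.ne]
    exact left_mem_Icc.2 hab.le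
  refine integrableOn_Ioc_of_intervalIntegral_norm_bounded_left (I := K) (a := Subtype.val)
    (fun c => hfi c.1 c.2) tendsto_comap (Eventually.of_forall fun c => ?_)
  rw [setIntegral_congr_fun measurableSet_Ioc
    fun x hx => Real.norm_of_nonneg (hf₀ x ⟨c.2.1.trans hx.1, hx.2⟩)]
  exact hK c c.2

theorem integrableOn_Ioi_rpow_mul_of_norm_le {f : ℝ → ℝ} {q y M : ℝ} (hq : q < -1) (hy : 0 < y)
    (hf : ContinuousOn f (Ioi y)) (hM : ∀ η ∈ Ioi y, ‖f η‖ ≤ M) :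
    IntegrableOn (fun η => η ^ q * f η) (Ioi y) :=
  (integrableOn_Ioi_rpow_of_lt hq hy).mul_bdd (hf.aestronglyMeasurable measurableSet_Ioi)
    ((ae_restrict_iff' measurableSet_Ioi).2 (ae_of_all _ hM))

theorem StrictConvexOn.const_mul {E : Type*} [AddCommMonoid E] [Module ℝ E] {s : Set E}
    {f : E → ℝ} {c : ℝ} (hc : 0 < c) (hf : StrictConvexOn ℝ s f) :
    StrictConvexOn ℝ s fun x => c * f x := by
  refine ⟨hf.1, fun x hx z hz hxz a b ha hb hab => ?_⟩
  have h := mul_lt_mul_of_pos_left (hf.2 hx hz hxz ha hb hab) hc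
  simp only [smul_eq_mul] at h ⊢
  linarith

theorem setIntegral_comp_mul_left_of_pos (g : ℝ → ℝ) (s : Set ℝ) {y : ℝ} (hy : 0 < y) :
    ∫ t in s, g (y * t) = y⁻¹ * ∫ η in y • s, g η := by
  simpa using Measure.setIntegral_comp_smul_of_pos volume g s hy

theorem integrableOn_comp_mul_left_iff {g : ℝ → ℝ} {s : Set ℝ} (hs : MeasurableSet s) {y : ℝ}
    (hy : y ≠ 0) : IntegrableOn (fun t => g (y * t)) s ↔ IntegrableOn g (y • s) := by
  rw [← integrable_indicator_iff hs, ← integrable_indicator_iff (hs.const_smul₀ y),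
    ← integrable_comp_mul_left_iff ((y • s).indicator g) hy]
  refine iff_of_eq (congrArg (Integrable · volume) (funext fun t => ?_))
  by_cases ht : t ∈ s
  · rw [indicator_of_mem ht, indicator_of_mem (by exact smul_mem_smul_set (a := y) ht)]
  · rw [indicator_of_notMem ht,
      indicator_of_notMem (by rwa [← smul_eq_mul, smul_mem_smul_set_iff₀ hy])]

section Rescaling

variable {s : Set ℝ} {y : ℝ}

theorem setIntegral_rpow_mul_comp_mul_left (hs : MeasurableSet s) (hs₀ : s ⊆ Ici 0) (hy : 0 < y)
    (g : ℝ → ℝ) (p : ℝ) :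
    ∫ t in s, t ^ p * g (y * t) = y ^ (-p - 1) * ∫ η in y • s, η ^ p * g η := by
  have hrescale : ∀ t ∈ s, t ^ p * g (y * t) = y ^ (-p) * ((y * t) ^ p * g (y * t)) :=
    fun t ht => by
      rw [Real.mul_rpow hy.le (hs₀ ht), Real.rpow_neg hy.le]
      field_simp [(Real.rpow_pos_of_pos hy p).ne']
  rw [setIntegral_congr_fun hs hrescale, integral_const_mul,
    setIntegral_comp_mul_left_of_pos (fun η => η ^ p * g η) s hy, ← mul_assoc,
    ← Real.rpow_neg_one, ← Real.rpow_add hy, ← sub_eq_add_neg]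

theorem IntegrableOn.rpow_mul_comp_mul_left (hs : MeasurableSet s) (hs₀ : s ⊆ Ici 0)
    (hy : 0 < y) {g : ℝ → ℝ} {p : ℝ} (h : IntegrableOn (fun η => η ^ p * g η) (y • s)) :
    IntegrableOn (fun t => t ^ p * g (y * t)) s := by
  have h' := ((integrableOn_comp_mul_left_iff hs hy.ne').2 h).const_mul (y ^ (-p))
  refine IntegrableOn.congr_fun h' (fun t ht => ?_) hs
  rw [Real.mul_rpow hy.le (hs₀ ht), Real.rpow_neg hy.le]
  field_simp [(Real.rpow_pos_of_pos hy p).ne']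

variable {w f : ℝ → ℝ}

theorem strictAntiOn_setIntegral_mul_comp_mul (hs : MeasurableSet s) (hμs : volume s ≠ 0)
    (hs₀ : s ⊆ Ioi 0) (hw : ∀ t ∈ s, 0 < w t) (hf : StrictAntiOn f (Ioi 0))
    (hint : ∀ y ∈ Ioi (0 : ℝ), IntegrableOn (fun t => w t * f (y * t)) s) :
    StrictAntiOn (fun y => ∫ t in s, w t * f (y * t)) (Ioi 0) := by
  intro y₁ hy₁ y₂ hy₂ hy
  refine setIntegral_lt_setIntegral hs hμs (hint y₂ hy₂) (hint y₁ hy₁) fun t ht => ?_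
  have ht₀ : 0 < t := hs₀ ht
  exact mul_lt_mul_of_pos_left (hf (mul_pos hy₁ ht₀) (mul_pos hy₂ ht₀)
    (mul_lt_mul_of_pos_right hy ht₀)) (hw t ht)

theorem strictConvexOn_setIntegral_mul_comp_mul (hs : MeasurableSet s) (hμs : volume s ≠ 0)
    (hs₀ : s ⊆ Ioi 0) (hw : ∀ t ∈ s, 0 < w t) (hf : StrictConvexOn ℝ (Ioi 0) f)
    (hint : ∀ y ∈ Ioi (0 : ℝ), IntegrableOn (fun t => w t * f (y * t)) s) :
    StrictConvexOn ℝ (Ioi 0) (fun y => ∫ t in s, w t * f (y * t)) := by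
  refine ⟨convex_Ioi 0, fun x hx z hz hxz a b ha hb hab => ?_⟩
  have hax := (hint x hx).const_mul a
  have hbz := (hint z hz).const_mul b
  simp only [smul_eq_mul]
  rw [← integral_const_mul, ← integral_const_mul, ← integral_add hax hbz]
  refine setIntegral_lt_setIntegral hs hμs (hint _ (convex_Ioi 0 hx hz ha.le hb.le hab))
    (hax.add hbz) fun t ht => ?_
  have ht₀ : 0 < t := hs₀ ht
  have h := hf.2 (mul_pos hx ht₀) (mul_pos hz ht₀) (fun h => hxz (mul_right_cancel₀ ht₀.ne' h))
    ha hb hab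
  simp only [smul_eq_mul] at h
  calc w t * f ((a * x + b * z) * t) = w t * f (a * (x * t) + b * (z * t)) := by
        congr 2; ring
    _ < w t * (a * f (x * t) + b * f (z * t)) := mul_lt_mul_of_pos_left h (hw t ht)
    _ = a * (w t * f (x * t)) + b * (w t * f (z * t)) := by ring

end Rescaling

noncomputable def twoSidedScaleTransform (p q : ℝ) (f : ℝ → ℝ) (y : ℝ) : ℝ :=
  (∫ t in Ioo 0 1, t ^ p * f (y * t)) + ∫ t in Ioi 1, t ^ q * f (y * t)

section TwoSidedScaleTransform

variable {p q y : ℝ} {f : ℝ → ℝ}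

theorem twoSidedScaleTransform_eq (hy : 0 < y) :
    twoSidedScaleTransform p q f y =
      y ^ (-p - 1) * (∫ η in Ioo 0 y, η ^ p * f η) + y ^ (-q - 1) * ∫ η in Ioi y, η ^ q * f η := by
  rw [twoSidedScaleTransform,
    setIntegral_rpow_mul_comp_mul_left measurableSet_Ioo (fun t ht => mem_Ici.2 ht.1.le) hy,
    setIntegral_rpow_mul_comp_mul_left measurableSet_Ioi (Ioi_subset_Ici zero_le_one) hy,
    LinearOrderedField.smul_Ioo hy, LinearOrderedField.smul_Ioi hy, mul_zero, mul_one]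

theorem integrableOn_Ioo_rpow_mul_comp_mul (hy : 0 < y)
    (h : IntegrableOn (fun η => η ^ p * f η) (Ioo 0 y)) :
    IntegrableOn (fun t => t ^ p * f (y * t)) (Ioo 0 1) := by
  refine IntegrableOn.rpow_mul_comp_mul_left measurableSet_Ioo (fun t ht => mem_Ici.2 ht.1.le) hy ?_
  rwa [LinearOrderedField.smul_Ioo hy, mul_zero, mul_one]

theorem integrableOn_Ioi_rpow_mul_comp_mul (hy : 0 < y)
    (h : IntegrableOn (fun η => η ^ q * f η) (Ioi y)) :
    IntegrableOn (fun t => t ^ q * f (y * t)) (Ioi 1) := by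
  refine IntegrableOn.rpow_mul_comp_mul_left measurableSet_Ioi (Ioi_subset_Ici zero_le_one) hy ?_
  rwa [LinearOrderedField.smul_Ioi hy, mul_one]

variable (h₀ : ∀ y, 0 < y → IntegrableOn (fun η => η ^ p * f η) (Ioo 0 y))
  (h₁ : ∀ y, 0 < y → IntegrableOn (fun η => η ^ q * f η) (Ioi y))
include h₀ h₁

theorem strictAntiOn_twoSidedScaleTransform (hf : StrictAntiOn f (Ioi 0)) :
    StrictAntiOn (twoSidedScaleTransform p q f) (Ioi 0) :=
  (strictAntiOn_setIntegral_mul_comp_mul measurableSet_Ioo (by simp) (fun _ ht => ht.1)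
    (fun t ht => Real.rpow_pos_of_pos ht.1 p) hf
    fun y hy => integrableOn_Ioo_rpow_mul_comp_mul hy (h₀ y hy)).add
  (strictAntiOn_setIntegral_mul_comp_mul measurableSet_Ioi (by simp)
    (Ioi_subset_Ioi zero_le_one) (fun t ht => Real.rpow_pos_of_pos (zero_lt_one.trans ht) q) hf
    fun y hy => integrableOn_Ioi_rpow_mul_comp_mul hy (h₁ y hy))

theorem strictConvexOn_twoSidedScaleTransform (hf : StrictConvexOn ℝ (Ioi 0) f) :
    StrictConvexOn ℝ (Ioi 0) (twoSidedScaleTransform p q f) :=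
  (strictConvexOn_setIntegral_mul_comp_mul measurableSet_Ioo (by simp) (fun _ ht => ht.1)
    (fun t ht => Real.rpow_pos_of_pos ht.1 p) hf
    fun y hy => integrableOn_Ioo_rpow_mul_comp_mul hy (h₀ y hy)).add
  (strictConvexOn_setIntegral_mul_comp_mul measurableSet_Ioi (by simp)
    (Ioi_subset_Ioi zero_le_one) (fun t ht => Real.rpow_pos_of_pos (zero_lt_one.trans ht) q) hf
    fun y hy => integrableOn_Ioi_rpow_mul_comp_mul hy (h₁ y hy))

end TwoSidedScaleTransform

theorem StrictConcaveOn.lt_add_mul_sub_of_hasDerivAt {S : Set ℝ} {f : ℝ → ℝ} {x y f' : ℝ}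
    (hf : StrictConcaveOn ℝ S f) (hx : x ∈ S) (hy : y ∈ S) (hxy : x ≠ y)
    (hf' : HasDerivAt f f' y) : f x < f y + f' * (x - y) := by
  rcases hxy.lt_or_gt with h | h
  · have hs := hf.lt_slope_of_hasDerivAt hx hy h hf'
    rw [slope_def_field, lt_div_iff₀ (sub_pos.2 h)] at hs
    linarith
  · have hs := hf.slope_lt_of_hasDerivAt hy hx h hf'
    rw [slope_def_field, div_lt_iff₀ (sub_pos.2 h)] at hs
    linarith

section Conjugate

variable {u u' I ũ : ℝ → ℝ} (hu : StrictConcaveOn ℝ (Ici 0) u)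
  (hu' : ∀ c, 0 < c → HasDerivAt u (u' c) c) (hI_pos : ∀ y, 0 < y → 0 < I y)
  (hI_left : ∀ y, 0 < y → u' (I y) = y) (hũ : ∀ y, 0 < y → ũ y = u (I y) - y * I y)
include hu hu' hI_pos hI_left hũ

theorem fenchelYoung_lt {y s : ℝ} (hy : 0 < y) (hs : 0 < s) (hys : y ≠ s) :
    u (I y) - s * I y < ũ s := by
  have hI : I y ≠ I s := fun h => hys (by rw [← hI_left y hy, h, hI_left s hs])
  have h := hu.lt_add_mul_sub_of_hasDerivAt (mem_Ici.2 (hI_pos y hy).le)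
    (mem_Ici.2 (hI_pos s hs).le) hI (hu' _ (hI_pos s hs))
  rw [hI_left s hs] at h
  rw [hũ s hs]
  linarith

theorem fenchelYoung_le {y s : ℝ} (hy : 0 < y) (hs : 0 < s) : u (I y) - s * I y ≤ ũ s := by
  rcases eq_or_ne y s with rfl | hys
  · rw [hũ y hy]
  · exact (fenchelYoung_lt hu hu' hI_pos hI_left hũ hy hs hys).le

theorem conj_sub_mul_sub_le {y s : ℝ} (hy : 0 < y) (hs : 0 < s) : ũ y - I y * (s - y) ≤ ũ s := by
  have h := fenchelYoung_le hu hu' hI_pos hI_left hũ hy hs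
  rw [hũ y hy]
  linarith

theorem antitoneOn_conj : AntitoneOn ũ (Ioi 0) := fun y hy s hs hys => by
  have h := conj_sub_mul_sub_le hu hu' hI_pos hI_left hũ hs hy
  nlinarith [hI_pos s hs]

theorem strictConvexOn_conj : StrictConvexOn ℝ (Ioi 0) ũ := by
  refine ⟨convex_Ioi 0, fun x hx z hz hxz a b ha hb hab => ?_⟩
  set m := a • x + b • z
  have hm : 0 < m := convex_Ioi 0 hx hz ha.le hb.le hab
  have hmx : m ≠ x := by
    intro h
    simp only [m, smul_eq_mul] at h
    exact hxz (mul_left_cancel₀ hb.ne' (by linear_combination x * hab - h))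
  have hmz : m ≠ z := by
    intro h
    simp only [m, smul_eq_mul] at h
    exact hxz (mul_left_cancel₀ ha.ne' (by linear_combination h - z * hab))
  have h₁ := fenchelYoung_lt hu hu' hI_pos hI_left hũ hm hx hmx
  have h₂ := fenchelYoung_lt hu hu' hI_pos hI_left hũ hm hz hmz
  have hũm : ũ m = a * (u (I m) - x * I m) + b * (u (I m) - z * I m) := by
    rw [hũ m hm]
    simp only [m, smul_eq_mul]
    linear_combination -u (I (a * x + b * z)) * hab
  simp only [smul_eq_mul]
  rw [hũm]
  nlinarith [mul_lt_mul_of_pos_left h₁ ha, mul_lt_mul_of_pos_left h₂ hb]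

theorem hasDerivAt_conj (hI_cont : ContinuousOn I (Ioi 0)) {y : ℝ} (hy : 0 < y) :
    HasDerivAt ũ (-I y) y := by
  rw [hasDerivAt_iff_isLittleO]
  have hI : Tendsto (fun s => I s - I y) (𝓝 y) (𝓝 0) := by
    simpa using (hI_cont.continuousAt (Ioi_mem_nhds hy)).tendsto.sub_const (I y)
  refine Asymptotics.IsBigO.trans_isLittleO (g := fun s => (I s - I y) * (s - y)) ?_ ?_
  · refine Asymptotics.IsBigO.of_bound 1 ?_
    filter_upwards [Ioi_mem_nhds hy] with s hs
    -- the two tangent lines at `y` and `s` squeeze the difference quotient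
    have h₁ := conj_sub_mul_sub_le hu hu' hI_pos hI_left hũ hy hs
    have h₂ := conj_sub_mul_sub_le hu hu' hI_pos hI_left hũ hs hy
    rw [one_mul, Real.norm_eq_abs, Real.norm_eq_abs, abs_le, smul_eq_mul]
    constructor <;>
      nlinarith [neg_abs_le ((I s - I y) * (s - y)), le_abs_self ((I s - I y) * (s - y))]
  · simpa using ((Asymptotics.isLittleO_one_iff ℝ).2 hI).mul_isBigO
      (Asymptotics.isBigO_refl (fun s => s - y) (𝓝 y))

theorem continuousOn_conj (hI_cont : ContinuousOn I (Ioi 0)) : ContinuousOn ũ (Ioi 0) :=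
  fun _ hx => (hasDerivAt_conj hu hu' hI_pos hI_left hũ hI_cont hx).continuousAt.continuousWithinAt

theorem setIntegral_Ioc_rpow_mul_conj_sub_le (hI_cont : ContinuousOn I (Ioi 0)) {p y c : ℝ}
    (hp : 0 < p) (hc : 0 < c) (hcy : c ≤ y)
    (hI_int : IntegrableOn (fun η => η ^ p * I η) (Ioo 0 y)) :
    ∫ x in Ioc c y, x ^ (p - 1) * (ũ x - ũ y) ≤ p⁻¹ * ∫ x in Ioo 0 y, x ^ p * I x := by
  have hpos : uIcc c y ⊆ Ioi 0 := by
    rw [uIcc_of_le hcy]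
    exact fun x hx => hc.trans_le hx.1
  have hder : ∀ x ∈ uIcc c y, HasDerivAt (fun x => p⁻¹ * (x ^ p * (ũ x - ũ y)))
      (x ^ (p - 1) * (ũ x - ũ y) - p⁻¹ * (x ^ p * I x)) x := by
    intro x hx
    have hx₀ : 0 < x := hpos hx
    refine (((Real.hasDerivAt_rpow_const (p := p) (Or.inl hx₀.ne')).mul
      ((hasDerivAt_conj hu hu' hI_pos hI_left hũ hI_cont hx₀).sub_const (ũ y))).const_mul
      p⁻¹).congr_deriv ?_
    field_simp
    ring
  have hA : ContinuousOn (fun x => x ^ (p - 1) * (ũ x - ũ y)) (uIcc c y) :=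
    (continuousOn_id.rpow_const fun x hx => Or.inl (hpos hx).ne').mul
      (((continuousOn_conj hu hu' hI_pos hI_left hũ hI_cont).mono hpos).sub continuousOn_const)
  have hB : ContinuousOn (fun x => p⁻¹ * (x ^ p * I x)) (uIcc c y) :=
    continuousOn_const.mul ((continuousOn_id.rpow_const fun x hx => Or.inl (hpos hx).ne').mul
      (hI_cont.mono hpos))
  have hftc := intervalIntegral.integral_eq_sub_of_hasDerivAt hder
    (hA.intervalIntegrable.sub hB.intervalIntegrable)
  rw [intervalIntegral.integral_sub hA.intervalIntegrable hB.intervalIntegrable,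
    intervalIntegral.integral_of_le hcy, intervalIntegral.integral_of_le hcy, integral_const_mul,
    integral_Ioc_eq_integral_Ioo (f := fun x => x ^ p * I x), sub_self, mul_zero, mul_zero,
    zero_sub] at hftc
  have hFc : 0 ≤ p⁻¹ * (c ^ p * (ũ c - ũ y)) :=
    mul_nonneg (inv_nonneg.2 hp.le) (mul_nonneg (Real.rpow_nonneg hc.le _)
      (sub_nonneg.2 (antitoneOn_conj hu hu' hI_pos hI_left hũ hc (hc.trans_le hcy) hcy)))
  have hIc : ∫ x in Ioo c y, x ^ p * I x ≤ ∫ x in Ioo 0 y, x ^ p * I x :=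
    setIntegral_mono_set hI_int
      ((ae_restrict_iff' measurableSet_Ioo).2 (ae_of_all _ fun x hx =>
        mul_nonneg (Real.rpow_nonneg hx.1.le _) (hI_pos x hx.1).le))
      (Ioo_subset_Ioo_left hc.le).eventuallyLE
  linarith [mul_le_mul_of_nonneg_left hIc (inv_nonneg.2 hp.le)]

theorem integrableOn_Ioo_rpow_sub_one_mul_conj (hI_cont : ContinuousOn I (Ioi 0)) {p y : ℝ}
    (hp : 0 < p) (hy : 0 < y)
    (hI_int : IntegrableOn (fun η => η ^ p * I η) (Ioo 0 y)) :
    IntegrableOn (fun η => η ^ (p - 1) * ũ η) (Ioo 0 y) := by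
  have hdiff : IntegrableOn (fun x => x ^ (p - 1) * (ũ x - ũ y)) (Ioc 0 y) := by
    refine integrableOn_Ioc_of_nonneg_of_setIntegral_le hy (fun x hx => ?_) (fun c hc => ?_)
      (fun c hc => setIntegral_Ioc_rpow_mul_conj_sub_le hu hu' hI_pos hI_left hũ hI_cont hp hc.1
        hc.2.le hI_int)
    · exact mul_nonneg (Real.rpow_nonneg hx.1.le _)
        (sub_nonneg.2 (antitoneOn_conj hu hu' hI_pos hI_left hũ hx.1 hy hx.2))
    · have hpos : Icc c y ⊆ Ioi 0 := fun x hx => hc.1.trans_le hx.1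
      exact (((continuousOn_id.rpow_const fun x hx => Or.inl (hpos hx).ne').mul
        (((continuousOn_conj hu hu' hI_pos hI_left hũ hI_cont).mono hpos).sub
          continuousOn_const)).integrableOn_Icc).mono_set Ioc_subset_Icc_self
  have hpow : IntegrableOn (fun x => ũ y * x ^ (p - 1)) (Ioo 0 y) :=
    ((intervalIntegral.integrableOn_Ioo_rpow_iff hy).2 (by linarith)).const_mul _
  exact IntegrableOn.congr_fun ((hdiff.mono_set Ioo_subset_Ioc_self).add hpow)
    (fun x _ => by simp only [Pi.add_apply]; ring) measurableSet_Ioo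

theorem integrableOn_Ioi_rpow_mul_conj (hI_cont : ContinuousOn I (Ioi 0)) {n y : ℝ} (hn : 1 < n)
    (hy : 0 < y) :
    IntegrableOn (fun η => η ^ (-n - 1) * ũ η) (Ioi y) := by
  have hpos : Ioi y ⊆ Ioi 0 := Ioi_subset_Ioi hy.le
  have hbound : ∀ η ∈ Ioi y, ‖ũ η / η‖ ≤ |ũ y| / y + I y := by
    intro η hη
    have hη₀ : 0 < η := hpos hη
    have h₁ := antitoneOn_conj hu hu' hI_pos hI_left hũ hy hη₀ (le_of_lt hη)
    have h₂ := conj_sub_mul_sub_le hu hu' hI_pos hI_left hũ hy hη₀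
    have h₃ : |ũ η| ≤ |ũ y| * (η / y) + I y * η := by
      have : |ũ y| ≤ |ũ y| * (η / y) :=
        le_mul_of_one_le_right (abs_nonneg _) ((one_le_div hy).2 (le_of_lt hη))
      rw [abs_le]
      constructor <;> nlinarith [neg_abs_le (ũ y), le_abs_self (ũ y), hI_pos y hy]
    rw [Real.norm_eq_abs, abs_div, abs_of_pos hη₀, div_le_iff₀ hη₀]
    calc |ũ η| ≤ |ũ y| * (η / y) + I y * η := h₃
      _ = (|ũ y| / y + I y) * η := by ring
  refine IntegrableOn.congr_fun (integrableOn_Ioi_rpow_mul_of_norm_le (q := -n) (by linarith) hy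
    (((continuousOn_conj hu hu' hI_pos hI_left hũ hI_cont).mono hpos).div continuousOn_id
      fun x hx => (hpos hx).ne') hbound) (fun η hη => ?_) measurableSet_Ioi
  rw [Pi.div_apply, id_eq, Real.rpow_sub_one (hpos hη).ne']
  ring

end Conjugate

theorem stmt_11_general
    (θ n₁ n₂ : ℝ)
    (hθ : θ ≠ 0)
    (hn₂0 : n₂ < 0) (hn₁1 : 1 < n₁)
    (u u' I utld : ℝ → ℝ)
    (hu_conc : StrictConcaveOn ℝ (Set.Ici 0) u)
    (hu_deriv : ∀ c : ℝ, 0 < c → HasDerivAt u (u' c) c)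
    (hI_pos : ∀ y : ℝ, 0 < y → 0 < I y)
    (hI_left : ∀ y : ℝ, 0 < y → u' (I y) = y)
    (hI_anti : StrictAntiOn I (Set.Ioi 0))
    (hI_cont : ContinuousOn I (Set.Ioi 0))
    (hutld : ∀ y : ℝ, 0 < y → utld y = u (I y) - y * I y)
    (hI_int : ∀ y : ℝ, 0 < y →
      MeasureTheory.IntegrableOn (fun η => η ^ (-n₂) * I η) (Set.Ioo 0 y) MeasureTheory.volume)
    (X_R : ℝ → ℝ)
    (hXR : ∀ y : ℝ, 0 < y → X_R y = (2 / (θ ^ 2 * (n₁ - n₂))) *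
      (y ^ (n₂ - 1) * (∫ η in Set.Ioo 0 y, η ^ (-n₂) * I η) +
       y ^ (n₁ - 1) * ∫ η in Set.Ioi y, η ^ (-n₁) * I η))
    (J_R : ℝ → ℝ)
    (hJR : ∀ y : ℝ, 0 < y → J_R y = (2 / (θ ^ 2 * (n₁ - n₂))) *
      (y ^ n₂ * (∫ η in Set.Ioo 0 y, η ^ (-n₂ - 1) * utld η) +
       y ^ n₁ * ∫ η in Set.Ioi y, η ^ (-n₁ - 1) * utld η))
    :
    StrictAntiOn X_R (Set.Ioi 0) ∧ StrictConvexOn ℝ (Set.Ioi 0) J_R := by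
  have hC : 0 < 2 / (θ ^ 2 * (n₁ - n₂)) := div_pos two_pos (mul_pos (by positivity) (by linarith))
  have hX : EqOn (fun y => 2 / (θ ^ 2 * (n₁ - n₂)) * twoSidedScaleTransform (-n₂) (-n₁) I y)
      X_R (Ioi 0) := fun y hy => by
    dsimp only
    rw [hXR y hy, twoSidedScaleTransform_eq hy, neg_neg, neg_neg]
  have hJ : EqOn
      (fun y => 2 / (θ ^ 2 * (n₁ - n₂)) * twoSidedScaleTransform (-n₂ - 1) (-n₁ - 1) utld y)
      J_R (Ioi 0) := fun y hy => by
    dsimp only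
    rw [hJR y hy, twoSidedScaleTransform_eq hy, show -(-n₂ - 1) - 1 = n₂ by ring,
      show -(-n₁ - 1) - 1 = n₁ by ring]
  have hI_tail : ∀ y, 0 < y → IntegrableOn (fun η => η ^ (-n₁) * I η) (Ioi y) := fun y hy =>
    integrableOn_Ioi_rpow_mul_of_norm_le (by linarith) hy (hI_cont.mono (Ioi_subset_Ioi hy.le))
      fun η hη => by
        rw [Real.norm_of_nonneg (hI_pos η (hy.trans hη)).le]
        exact (hI_anti hy (hy.trans hη) hη).le
  have hutld₀ : ∀ y, 0 < y → IntegrableOn (fun η => η ^ (-n₂ - 1) * utld η) (Ioo 0 y) :=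
    fun y hy => integrableOn_Ioo_rpow_sub_one_mul_conj hu_conc hu_deriv hI_pos hI_left hutld
      hI_cont (neg_pos.2 hn₂0) hy (hI_int y hy)
  have hutld₁ : ∀ y, 0 < y → IntegrableOn (fun η => η ^ (-n₁ - 1) * utld η) (Ioi y) :=
    fun y hy => integrableOn_Ioi_rpow_mul_conj hu_conc hu_deriv hI_pos hI_left hutld hI_cont hn₁1 hy
  exact ⟨((strictMono_mul_left_of_pos hC).comp_strictAntiOn
      (strictAntiOn_twoSidedScaleTransform hI_int hI_tail hI_anti)).congr hX,
    ((strictConvexOn_twoSidedScaleTransform hutld₀ hutld₁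
      (strictConvexOn_conj hu_conc hu_deriv hI_pos hI_left hutld)).const_mul hC).congr hJ⟩

/-- X_R is strictly decreasing on (0,∞); equivalently J_R is strictly convex on (0,∞). -/
theorem stmt_11
    (δ r θ n₁ n₂ : ℝ)
    (hδ : 0 < δ) (hr : 0 < r) (hθ : θ ≠ 0)
    (hn₂0 : n₂ < 0) (hn₁1 : 1 < n₁)
    (hroot₁ : θ ^ 2 / 2 * n₁ ^ 2 + (δ - r - θ ^ 2 / 2) * n₁ - δ = 0)
    (hroot₂ : θ ^ 2 / 2 * n₂ ^ 2 + (δ - r - θ ^ 2 / 2) * n₂ - δ = 0)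
    (u u' I utld : ℝ → ℝ)
    (hu_mono : StrictMonoOn u (Set.Ici 0))
    (hu_conc : StrictConcaveOn ℝ (Set.Ici 0) u)
    (hu_cont : ContinuousOn u (Set.Ici 0))
    (hu_deriv : ∀ c : ℝ, 0 < c → HasDerivAt u (u' c) c)
    (hu'_cont : ContinuousOn u' (Set.Ioi 0))
    (hu'_top : Filter.Tendsto u' Filter.atTop (nhds 0))
    (hu'_zero : Filter.Tendsto u' (nhdsWithin 0 (Set.Ioi 0)) Filter.atTop)
    (hI_pos : ∀ y : ℝ, 0 < y → 0 < I y)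
    (hI_left : ∀ y : ℝ, 0 < y → u' (I y) = y)
    (hI_right : ∀ c : ℝ, 0 < c → I (u' c) = c)
    (hI_anti : StrictAntiOn I (Set.Ioi 0))
    (hI_cont : ContinuousOn I (Set.Ioi 0))
    (hI_zero : Filter.Tendsto I (nhdsWithin 0 (Set.Ioi 0)) Filter.atTop)
    (hI_top : Filter.Tendsto I Filter.atTop (nhds 0))
    (hutld : ∀ y : ℝ, 0 < y → utld y = u (I y) - y * I y)
    (hI_int : ∀ y : ℝ, 0 < y →
      MeasureTheory.IntegrableOn (fun η => η ^ (-n₂) * I η) (Set.Ioo 0 y) MeasureTheory.volume)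
    (X_R : ℝ → ℝ)
    (hXR : ∀ y : ℝ, 0 < y → X_R y = (2 / (θ ^ 2 * (n₁ - n₂))) *
      (y ^ (n₂ - 1) * (∫ η in Set.Ioo 0 y, η ^ (-n₂) * I η) +
       y ^ (n₁ - 1) * ∫ η in Set.Ioi y, η ^ (-n₁) * I η))
    (J_R : ℝ → ℝ)
    (hJR : ∀ y : ℝ, 0 < y → J_R y = (2 / (θ ^ 2 * (n₁ - n₂))) *
      (y ^ n₂ * (∫ η in Set.Ioo 0 y, η ^ (-n₂ - 1) * utld η) +
       y ^ n₁ * ∫ η in Set.Ioi y, η ^ (-n₁ - 1) * utld η))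
    :
    StrictAntiOn X_R (Set.Ioi 0) ∧ StrictConvexOn ℝ (Set.Ioi 0) J_R :=
  stmt_11_general θ n₁ n₂ hθ hn₂0 hn₁1 u u' I utld hu_conc hu_deriv hI_pos hI_left hI_anti hI_cont
    hutld hI_int X_R hXR J_R hJR
end

section
/- The function X_R satisfies lim_{y→0+} X_R(y) = ∞ and lim_{y→∞} X_R(y) = 0. -/
/-!
The substitution `η = y t` turns `X_R y` into
`C * (∫ t in (0, 1), t ^ (-n₂) * I (y t) + ∫ t in (1, ∞), t ^ (-n₁) * I (y t))`
with `C = 2 / (θ ^ 2 * (n₁ - n₂)) > 0`.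
As `y → ∞` both integrals tend to `0` by dominated convergence: since `I` is decreasing,
`I (y t) ≤ I t` for `y ≥ 1`. As `y → 0+` the second integral is at least its part over `(1, 2)`,
which is at least `2 ^ (-n₁) * I (2 y) → ∞`.
-/

open MeasureTheory Set Filter Topology

lemma rpow_eq_rpow_neg_mul_mul_rpow {y : ℝ} (hy : 0 < y) (p : ℝ) {t : ℝ} (ht : 0 ≤ t) :
    t ^ p = y ^ (-p) * (y * t) ^ p := by
  rw [Real.mul_rpow hy.le ht, ← mul_assoc, ← Real.rpow_add hy, neg_add_cancel, Real.rpow_zero,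
    one_mul]

lemma rpow_mul_integral_Ioo_zero_rpow_mul (f : ℝ → ℝ) (p : ℝ) {y : ℝ} (hy : 0 < y) :
    y ^ (-p - 1) * ∫ η in Ioo 0 y, η ^ p * f η = ∫ t in Ioo 0 1, t ^ p * f (y * t) := by
  have h (t : ℝ) (ht : 0 ≤ t) : t ^ p * f (y * t) = y ^ (-p) * ((y * t) ^ p * f (y * t)) := by
    rw [rpow_eq_rpow_neg_mul_mul_rpow hy p ht, mul_assoc]
  rw [setIntegral_congr_fun measurableSet_Ioo fun t ht => h t ht.1.le,
    integral_const_mul, ← integral_Ioc_eq_integral_Ioo, ← integral_Ioc_eq_integral_Ioo,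
    ← intervalIntegral.integral_of_le zero_le_one, ← intervalIntegral.integral_of_le hy.le,
    intervalIntegral.integral_comp_mul_left (fun η => η ^ p * f η) hy.ne', mul_zero, mul_one,
    smul_eq_mul, ← mul_assoc, Real.rpow_sub hy, Real.rpow_one, div_eq_mul_inv]

lemma rpow_mul_integral_Ioi_rpow_mul (f : ℝ → ℝ) (p : ℝ) {y : ℝ} (hy : 0 < y) :
    y ^ (-p - 1) * ∫ η in Ioi y, η ^ p * f η = ∫ t in Ioi 1, t ^ p * f (y * t) := by
  have h (t : ℝ) (ht : 0 ≤ t) : t ^ p * f (y * t) = y ^ (-p) * ((y * t) ^ p * f (y * t)) := by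
    rw [rpow_eq_rpow_neg_mul_mul_rpow hy p ht, mul_assoc]
  rw [setIntegral_congr_fun measurableSet_Ioi fun t (ht : 1 < t) => h t (zero_le_one.trans ht.le),
    integral_const_mul, integral_comp_mul_left_Ioi (fun η => η ^ p * f η) 1 hy, mul_one,
    smul_eq_mul, ← mul_assoc, Real.rpow_sub hy, Real.rpow_one, div_eq_mul_inv]

lemma tendsto_two_mul_nhdsGT_zero : Tendsto (fun y : ℝ => 2 * y) (𝓝[>] 0) (𝓝[>] 0) := by
  simpa only [comap_mulLeft_nhdsGT_zero (two_pos : (0 : ℝ) < 2)] using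
    (tendsto_comap : Tendsto (fun y : ℝ => 2 * y) _ (𝓝[>] 0))

section Antitone

variable {I : ℝ → ℝ} (hI_pos : ∀ y : ℝ, 0 < y → 0 < I y) (hI_anti : AntitoneOn I (Ioi 0))
  (hI_cont : ContinuousOn I (Ioi 0))
include hI_pos hI_anti hI_cont

lemma integrableOn_Ioi_one_rpow_mul_comp_mul {q : ℝ} (hq : q < -1) {y : ℝ} (hy : 0 < y) :
    IntegrableOn (fun t => t ^ q * I (y * t)) (Ioi 1) := by
  have hmeas : ContinuousOn (fun t => t ^ q * I (y * t)) (Ioi 1) :=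
    (continuousOn_id.rpow_const fun t ht => Or.inl (zero_lt_one.trans ht).ne').mul
      (hI_cont.comp (continuousOn_const.mul continuousOn_id) fun t ht =>
        mul_pos hy (zero_lt_one.trans ht))
  refine ((integrableOn_Ioi_rpow_of_lt hq zero_lt_one).mul_const (I y)).mono'
    (hmeas.aestronglyMeasurable measurableSet_Ioi) ?_
  filter_upwards [ae_restrict_mem measurableSet_Ioi] with t ht
  have ht0 : 0 < t := zero_lt_one.trans ht
  have hyt : y ≤ y * t := le_mul_of_one_le_right hy.le ht.le
  rw [Real.norm_of_nonneg (mul_nonneg (Real.rpow_nonneg ht0.le q) (hI_pos _ (mul_pos hy ht0)).le)]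
  exact mul_le_mul_of_nonneg_left (hI_anti hy (hy.trans_le hyt) hyt) (Real.rpow_nonneg ht0.le q)

lemma rpow_mul_le_integral_Ioi_one_rpow_mul_comp_mul {q : ℝ} (hq : q < -1) {y : ℝ} (hy : 0 < y) :
    2 ^ q * I (2 * y) ≤ ∫ t in Ioi 1, t ^ q * I (y * t) := by
  have hint := integrableOn_Ioi_one_rpow_mul_comp_mul hI_pos hI_anti hI_cont hq hy
  calc 2 ^ q * I (2 * y) = ∫ _ in Ioo (1 : ℝ) 2, 2 ^ q * I (2 * y) := by
        norm_num [measureReal_def, Real.volume_Ioo]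
    _ ≤ ∫ t in Ioo 1 2, t ^ q * I (y * t) := by
        refine setIntegral_mono_on (integrableOn_const measure_Ioo_lt_top.ne)
          (hint.mono_set Ioo_subset_Ioi_self) measurableSet_Ioo fun t ht => ?_
        have ht0 : 0 < t := zero_lt_one.trans ht.1
        have hyt : y * t ≤ 2 * y := by nlinarith [ht.2]
        exact mul_le_mul (Real.rpow_le_rpow_of_nonpos ht0 ht.2.le (by linarith))
          (hI_anti (mul_pos hy ht0) (mul_pos two_pos hy) hyt) (hI_pos _ (mul_pos two_pos hy)).le
          (Real.rpow_nonneg ht0.le q)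
    _ ≤ ∫ t in Ioi 1, t ^ q * I (y * t) := by
        refine setIntegral_mono_set hint ?_ Ioo_subset_Ioi_self.eventuallyLE
        filter_upwards [ae_restrict_mem measurableSet_Ioi] with t ht
        have ht0 : 0 < t := zero_lt_one.trans ht
        exact mul_nonneg (Real.rpow_nonneg ht0.le q) (hI_pos _ (mul_pos hy ht0)).le

lemma tendsto_setIntegral_mul_comp_mul_atTop (hI_top : Tendsto I atTop (𝓝 0)) {s : Set ℝ}
    (hs : MeasurableSet s) (hs0 : s ⊆ Ioi 0) {k : ℝ → ℝ} (hk_nonneg : ∀ t ∈ s, 0 ≤ k t)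
    (hk_cont : ContinuousOn k s) (hkI : IntegrableOn (fun t => k t * I t) s) :
    Tendsto (fun y => ∫ t in s, k t * I (y * t)) atTop (𝓝 0) := by
  have hlim : Tendsto (fun y => ∫ t in s, k t * I (y * t)) atTop (𝓝 (∫ t in s, k t * 0)) := by
    refine tendsto_integral_filter_of_dominated_convergence _ ?_ ?_ hkI ?_
    · filter_upwards [eventually_gt_atTop 0] with y hy
      exact (hk_cont.mul (hI_cont.comp (continuousOn_const.mul continuousOn_id)
        fun t ht => mul_pos hy (hs0 ht))).aestronglyMeasurable hs
    · filter_upwards [eventually_ge_atTop 1] with y hy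
      filter_upwards [ae_restrict_mem hs] with t ht
      have ht0 : 0 < t := hs0 ht
      have hty : t ≤ y * t := le_mul_of_one_le_left ht0.le hy
      rw [Real.norm_of_nonneg (mul_nonneg (hk_nonneg t ht) (hI_pos _ (ht0.trans_le hty)).le)]
      exact mul_le_mul_of_nonneg_left (hI_anti ht0 (ht0.trans_le hty) hty) (hk_nonneg t ht)
    · filter_upwards [ae_restrict_mem hs] with t ht
      exact (hI_top.comp (tendsto_id.atTop_mul_const (hs0 ht))).const_mul (k t) |>.congr
        fun y => by simp [mul_comm y]
  simpa using hlim

end Antitone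

theorem stmt_12_general
    (θ n₁ n₂ : ℝ)
    (hθ : θ ≠ 0)
    (hn₂0 : n₂ < 0) (hn₁1 : 1 < n₁)
    (I : ℝ → ℝ)
    (hI_pos : ∀ y : ℝ, 0 < y → 0 < I y)
    (hI_anti : StrictAntiOn I (Set.Ioi 0))
    (hI_cont : ContinuousOn I (Set.Ioi 0))
    (hI_zero : Filter.Tendsto I (nhdsWithin 0 (Set.Ioi 0)) Filter.atTop)
    (hI_top : Filter.Tendsto I Filter.atTop (nhds 0))
    (hI_int : ∀ y : ℝ, 0 < y →
      MeasureTheory.IntegrableOn (fun η => η ^ (-n₂) * I η) (Set.Ioo 0 y) MeasureTheory.volume)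
    (X_R : ℝ → ℝ)
    (hXR : ∀ y : ℝ, 0 < y → X_R y = (2 / (θ ^ 2 * (n₁ - n₂))) *
      (y ^ (n₂ - 1) * (∫ η in Set.Ioo 0 y, η ^ (-n₂) * I η) +
       y ^ (n₁ - 1) * ∫ η in Set.Ioi y, η ^ (-n₁) * I η))
    :
    Filter.Tendsto X_R (nhdsWithin 0 (Set.Ioi 0)) Filter.atTop ∧
    Filter.Tendsto X_R Filter.atTop (nhds 0) := by
  have hI_antitone := hI_anti.antitoneOn
  set C : ℝ := 2 / (θ ^ 2 * (n₁ - n₂))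
  have hC : 0 < C := div_pos two_pos (mul_pos (pow_two_pos_of_ne_zero hθ) (by linarith))
  have hq : -n₁ < -1 := by linarith
  have hX : ∀ y, 0 < y → X_R y = C * ((∫ t in Ioo 0 1, t ^ (-n₂) * I (y * t)) +
      ∫ t in Ioi 1, t ^ (-n₁) * I (y * t)) := fun y hy => by
    rw [hXR y hy, ← rpow_mul_integral_Ioo_zero_rpow_mul I _ hy,
      ← rpow_mul_integral_Ioi_rpow_mul I _ hy, neg_neg, neg_neg]
  constructor
  · refine tendsto_atTop_mono' _ ?_ <| ((hI_zero.comp tendsto_two_mul_nhdsGT_zero).const_mul_atTop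
      (mul_pos hC (Real.rpow_pos_of_pos two_pos (-n₁))))
    filter_upwards [self_mem_nhdsWithin] with y (hy : 0 < y)
    have hA : 0 ≤ ∫ t in Ioo 0 1, t ^ (-n₂) * I (y * t) :=
      setIntegral_nonneg measurableSet_Ioo fun t ht =>
        mul_nonneg (Real.rpow_nonneg ht.1.le _) (hI_pos _ (mul_pos hy ht.1)).le
    have hB := rpow_mul_le_integral_Ioi_one_rpow_mul_comp_mul hI_pos hI_antitone hI_cont hq hy
    rw [hX y hy, Function.comp_apply, mul_assoc]
    exact mul_le_mul_of_nonneg_left (by linarith) hC.le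
  · have hA := tendsto_setIntegral_mul_comp_mul_atTop hI_pos hI_antitone hI_cont hI_top
      measurableSet_Ioo (fun t ht => ht.1) (fun t ht => Real.rpow_nonneg ht.1.le (-n₂))
      (continuousOn_id.rpow_const fun t ht => Or.inl ht.1.ne') (hI_int 1 one_pos)
    have hB := tendsto_setIntegral_mul_comp_mul_atTop hI_pos hI_antitone hI_cont hI_top
      measurableSet_Ioi (fun t (ht : 1 < t) => (zero_lt_one.trans ht : 0 < t))
      (fun t ht => Real.rpow_nonneg (zero_le_one.trans ht.le) (-n₁))
      (continuousOn_id.rpow_const fun t ht => Or.inl (zero_lt_one.trans ht).ne')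
      (by simpa using integrableOn_Ioi_one_rpow_mul_comp_mul hI_pos hI_antitone hI_cont hq one_pos)
    rw [show (0 : ℝ) = C * (0 + 0) by ring]
    exact ((hA.add hB).const_mul C).congr' <|
      (eventually_gt_atTop 0).mono fun y hy => (hX y hy).symm

/-- lim_{y→0+} X_R(y) = ∞ and lim_{y→∞} X_R(y) = 0. -/
theorem stmt_12
    (δ r θ n₁ n₂ : ℝ)
    (hδ : 0 < δ) (hr : 0 < r) (hθ : θ ≠ 0)
    (hn₂0 : n₂ < 0) (hn₁1 : 1 < n₁)
    (hroot₁ : θ ^ 2 / 2 * n₁ ^ 2 + (δ - r - θ ^ 2 / 2) * n₁ - δ = 0)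
    (hroot₂ : θ ^ 2 / 2 * n₂ ^ 2 + (δ - r - θ ^ 2 / 2) * n₂ - δ = 0)
    (u u' I utld : ℝ → ℝ)
    (hu_mono : StrictMonoOn u (Set.Ici 0))
    (hu_conc : StrictConcaveOn ℝ (Set.Ici 0) u)
    (hu_cont : ContinuousOn u (Set.Ici 0))
    (hu_deriv : ∀ c : ℝ, 0 < c → HasDerivAt u (u' c) c)
    (hu'_cont : ContinuousOn u' (Set.Ioi 0))
    (hu'_top : Filter.Tendsto u' Filter.atTop (nhds 0))
    (hu'_zero : Filter.Tendsto u' (nhdsWithin 0 (Set.Ioi 0)) Filter.atTop)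
    (hI_pos : ∀ y : ℝ, 0 < y → 0 < I y)
    (hI_left : ∀ y : ℝ, 0 < y → u' (I y) = y)
    (hI_right : ∀ c : ℝ, 0 < c → I (u' c) = c)
    (hI_anti : StrictAntiOn I (Set.Ioi 0))
    (hI_cont : ContinuousOn I (Set.Ioi 0))
    (hI_zero : Filter.Tendsto I (nhdsWithin 0 (Set.Ioi 0)) Filter.atTop)
    (hI_top : Filter.Tendsto I Filter.atTop (nhds 0))
    (hutld : ∀ y : ℝ, 0 < y → utld y = u (I y) - y * I y)
    (hI_int : ∀ y : ℝ, 0 < y →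
      MeasureTheory.IntegrableOn (fun η => η ^ (-n₂) * I η) (Set.Ioo 0 y) MeasureTheory.volume)
    (X_R : ℝ → ℝ)
    (hXR : ∀ y : ℝ, 0 < y → X_R y = (2 / (θ ^ 2 * (n₁ - n₂))) *
      (y ^ (n₂ - 1) * (∫ η in Set.Ioo 0 y, η ^ (-n₂) * I η) +
       y ^ (n₁ - 1) * ∫ η in Set.Ioi y, η ^ (-n₁) * I η))
    :
    Filter.Tendsto X_R (nhdsWithin 0 (Set.Ioi 0)) Filter.atTop ∧
    Filter.Tendsto X_R Filter.atTop (nhds 0) :=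
  stmt_12_general θ n₁ n₂ hθ hn₂0 hn₁1 I hI_pos hI_anti hI_cont hI_zero hI_top hI_int X_R hXR
end
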